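/- arXiv:math/0012230 — 3 statements merged into one kernel-verified Lean document; each statement's English description precedes it below -/
import Mathlib

section
/- Let S(x,y;t) be the element of R[[t]], where R = ℤ[x,x⁻¹,y,y⁻¹], whose coefficient of tⁿ is ∑_{(i,j)∈ℤ²} a_{i,j}(n) x^i y^j for walks with diagonal steps. Let R₁₆ be the unique formal power series in ℚ[[t]] with constant term 1 satisfying R₁₆² = 1−16t². Then, in R⊗ℚ[[t]], one has 2·((1 − t(x+x⁻¹)(y+y⁻¹)) · S(x,y;t))² = 1 − 8t²(1 + x⁻²) + R₁₆. (Equivalently, S(x,y;t) = (1 − 8t²(1+x⁻²) + √(1−16t²))^{1/2} / (√2 · (1 − t(x+x⁻¹)(y+y⁻¹))).) -/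
/-!
Write `K = 1 - t(x + x⁻¹)(y + y⁻¹)`. With `a = (1 - 8t² + R₁₆)/2` and `u` given by `a u = 4t²`,
`a + 4t²u = 1 - 8t²`, the kernel of the walks projected to the `x`-axis factors as
`1 - 4t²(x + x⁻¹)² = (a - 4t²x⁻²)(1 - u x²)`. Let `V = √(a - 4t²x⁻²)` (Hensel's lemma): it involves
only powers `xⁱ` with `i ≤ 0`, i.e. it is supported on the slit `H`, so `F = V / K` obeys the
step-by-step recursion of the walk counts off `H`. On the `x`-axis, the `y⁰`-part of `F` is `V W` with
`W = [y⁰] 1/K = 1/√(1 - 4t²(x + x⁻¹)²)`, hence `(V W)² = 1/(1 - u x²)`; so beyond `t`-degree `0`,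
`V W` involves only `xⁱ` with `i ≥ 1`, and `F` vanishes on `H`. Thus `F = S`, and
`2(K S)² = 2V² = 2a - 8t²x⁻² = 1 - 8t²(1 + x⁻²) + R₁₆`.

Laurent polynomials in `x` are `ℚ[T;T⁻¹]`, with `T i = xⁱ`.
-/

open Filter PowerSeries

/-- The forbidden half-line `H = {(k,0) : k ≤ 0}`. -/
def slitH : Set (ℤ × ℤ) := {p : ℤ × ℤ | p.2 = 0 ∧ p.1 ≤ 0}

/-- The four diagonal steps. -/
def diagSteps : Set (ℤ × ℤ) := {(1,1), (1,-1), (-1,1), (-1,-1)}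

/-- `w : Fin (n+1) → ℤ × ℤ` is a walk on the slit plane with steps in `A`. -/
def IsSlitWalk (A : Set (ℤ × ℤ)) (n : ℕ) (w : Fin (n+1) → ℤ × ℤ) : Prop :=
  w 0 = (0,0) ∧ (∀ m : Fin n, w m.succ - w m.castSucc ∈ A) ∧
    ∀ m : Fin (n+1), 1 ≤ (m : ℕ) → w m ∉ slitH

/-- `a_{i,j}(n)`: the number of walks on the slit plane of length `n` ending at `(i,j)`. -/
noncomputable def slitCount (A : Set (ℤ × ℤ)) (i j : ℤ) (n : ℕ) : ℕ :=
  Nat.card {w : Fin (n+1) → ℤ × ℤ // IsSlitWalk A n w ∧ w (Fin.last n) = (i, j)}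

namespace PowerSeries

@[simp]
theorem constantCoeff_map {R S : Type*} [CommSemiring R] [CommSemiring S] (f : R →+* S)
    (φ : R⟦X⟧) : constantCoeff (map f φ) = f (constantCoeff φ) :=
  MvPowerSeries.constantCoeff_map f φ

theorem coeff_mul_mem_of_constantCoeff_eq_zero {R : Type*} [Semiring R]
    (M : NonUnitalSubsemiring R) {f g : R⟦X⟧} {n : ℕ} (hf₀ : constantCoeff f = 0)
    (hg₀ : constantCoeff g = 0) (hf : ∀ i, 0 < i → i < n → coeff i f ∈ M)
    (hg : ∀ i, 0 < i → i < n → coeff i g ∈ M) :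
    coeff n (f * g) ∈ M := by
  rw [coeff_mul]
  refine sum_mem fun p hp => ?_
  rw [Finset.HasAntidiagonal.mem_antidiagonal] at hp
  rcases Nat.eq_zero_or_pos p.1 with h1 | h1
  · simp [h1, hf₀]
  rcases Nat.eq_zero_or_pos p.2 with h2 | h2
  · simp [h2, hg₀]
  exact mul_mem (hf _ h1 (by omega)) (hg _ h2 (by omega))

theorem coeff_mem_of_mul_one_sub_eq_one {R : Type*} [CommRing R] (M : NonUnitalSubring R)
    {G H : R⟦X⟧} (hGH : G * (1 - H) = 1) (hH₀ : constantCoeff H = 0)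
    (hH : ∀ n, coeff n H ∈ M) :
    ∀ n, 0 < n → coeff n G ∈ M := by
  have hG₀ : constantCoeff G = 1 := by simpa [hH₀] using congrArg constantCoeff hGH
  set D := G - 1
  have hD₀ : constantCoeff D = 0 := by simp [D, hG₀]
  have hD : D = H + D * H := by linear_combination hGH
  intro n
  induction n using Nat.strong_induction_on with
  | _ n ih =>
    intro hn
    have : coeff n D ∈ M := by
      rw [hD, map_add]
      refine add_mem (hH n) (coeff_mul_mem_of_constantCoeff_eq_zero M.toNonUnitalSubsemiring
        hD₀ hH₀ (fun i hi hin => ?_) fun i _ _ => hH i)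
      simpa [D, hi.ne'] using ih i hin hi
    simpa [D, hn.ne'] using this

theorem coeff_mem_of_mul_self_eq {L : Type*} [CommRing L] [Algebra ℚ L]
    (M : NonUnitalSubalgebra ℚ L) {E G : L⟦X⟧} (hEG : E * E = G) (hE₀ : constantCoeff E = 1)
    (hG : ∀ n, 0 < n → coeff n G ∈ M) :
    ∀ n, 0 < n → coeff n E ∈ M := by
  set D := E - 1
  have hD₀ : constantCoeff D = 0 := by simp [D, hE₀]
  have hD : (2 : ℚ) • D = G - 1 - D * D := by rw [← hEG, two_smul]; ring
  intro n
  induction n using Nat.strong_induction_on with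
  | _ n ih =>
    intro hn
    have hDD : coeff n (D * D) ∈ M := by
      refine coeff_mul_mem_of_constantCoeff_eq_zero M.toNonUnitalSubsemiring hD₀ hD₀ ?_ ?_ <;>
      exact fun i hi hin => by simpa [D, hi.ne'] using ih i hin hi
    have h2D : (2 : ℚ) • coeff n D ∈ M := by
      rw [← coeff_smul, hD, map_sub, map_sub, coeff_one, if_neg hn.ne', sub_zero]
      exact sub_mem (hG n hn) hDD
    have hD : coeff n D ∈ M := by
      simpa [smul_smul] using M.smul_mem (2⁻¹ : ℚ) h2D
    simpa [D, hn.ne'] using hD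

theorem exists_mul_self_eq_of_constantCoeff_eq_one {L : Type*} [CommRing L] (h2 : IsUnit (2 : L))
    {F : L⟦X⟧} (hF : constantCoeff F = 1) : ∃ V : L⟦X⟧, V * V = F ∧ constantCoeff V = 1 := by
  have h2' : IsUnit (2 : L⟦X⟧) := by rw [← map_ofNat C 2]; exact h2.map C
  -- `L⟦X⟧` is `X`-adically complete, and `1` is a simple root of `Y² - F` modulo `X`.
  obtain ⟨V, hroot, hV⟩ := HenselianRing.is_henselian (R := L⟦X⟧) (I := Ideal.span {X})
    (Polynomial.X ^ 2 - Polynomial.C F) (Polynomial.monic_X_pow_sub_C _ two_ne_zero) 1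
    (by rw [Ideal.mem_span_singleton, X_dvd_iff]; simp [hF])
    (by simpa [one_add_one_eq_two] using h2'.map (Ideal.Quotient.mk _))
  refine ⟨V, by simpa [sq, sub_eq_zero] using hroot, ?_⟩
  rw [Ideal.mem_span_singleton, X_dvd_iff] at hV
  simpa [sub_eq_zero] using hV

end PowerSeries

namespace AddMonoidAlgebra

variable {k : Type*} [CommSemiring k]

theorem mul_mem_supported {G : Type*} [AddMonoid G] {s : Set G}
    (hs : ∀ a ∈ s, ∀ b ∈ s, a + b ∈ s) {f g : AddMonoidAlgebra k G}
    (hf : f ∈ supported k k s) (hg : g ∈ supported k k s) : f * g ∈ supported k k s := by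
  classical
  rw [mem_supported] at *
  refine (Finset.coe_subset.mpr (support_coeff_mul_subset f g)).trans ?_
  rintro _ hx
  obtain ⟨a, ha, b, hb, rfl⟩ := Finset.mem_add.mp hx
  exact hs a (hf ha) b (hg hb)

variable (k) in
noncomputable def supportedNonUnitalSubalgebra {G : Type*} [AddMonoid G] (s : Set G)
    (hs : ∀ a ∈ s, ∀ b ∈ s, a + b ∈ s) : NonUnitalSubalgebra k (AddMonoidAlgebra k G) :=
  (supported k k s).toNonUnitalSubalgebra fun _ _ => mul_mem_supported hs

theorem coeff_sum_single_mul {G : Type*} [AddCommGroup G] (D : Finset G)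
    (f : AddMonoidAlgebra k G) (p : G) :
    ((∑ d ∈ D, single d (1 : k)) * f).coeff p = ∑ d ∈ D, f.coeff (p - d) := by
  simp [Finset.sum_mul, coeff_sum, Finset.sum_apply', neg_add_eq_sub]

theorem coeff_mapDomain_inl_mul_mapDomain_inr {G H : Type*} [AddMonoid G] [AddMonoid H]
    (f : AddMonoidAlgebra k G) (g : AddMonoidAlgebra k H) (a : G) (b : H) :
    (mapDomain (AddMonoidHom.inl G H) f * mapDomain (AddMonoidHom.inr G H) g).coeff (a, b) =
      f.coeff a * g.coeff b := by
  classical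
  induction f using AddMonoidAlgebra.induction_linear with
  | zero => simp
  | add f₁ f₂ h₁ h₂ => simp only [mapDomain_add, add_mul, coeff_add, Finsupp.add_apply, h₁, h₂]
  | single a' r =>
    induction g using AddMonoidAlgebra.induction_linear with
    | zero => simp
    | add g₁ g₂ h₁ h₂ => simp only [mapDomain_add, mul_add, coeff_add, Finsupp.add_apply, h₁, h₂]
    | single b' s =>
      simp only [mapDomain_single, single_mul_single, coeff_single, Finsupp.single_apply]
      split_ifs <;> simp_all

end AddMonoidAlgebra

section CentralBinom

noncomputable def centralBinomSeries : ℚ⟦X⟧ := mk fun n => (n.centralBinom : ℚ)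

theorem derivative_centralBinomSeries :
    d⁄dX ℚ centralBinomSeries = 4 * X * d⁄dX ℚ centralBinomSeries + 2 * centralBinomSeries := by
  have hrec (n : ℕ) :
      ((n + 1).centralBinom : ℚ) * (n + 1) = 4 * n * n.centralBinom + 2 * n.centralBinom := by
    have := congrArg (Nat.cast (R := ℚ)) (Nat.succ_mul_centralBinom_succ n)
    push_cast at this
    linear_combination this
  ext n
  rw [mul_assoc, show (4 : ℚ⟦X⟧) = C 4 from rfl, show (2 : ℚ⟦X⟧) = C 2 from rfl]
  rcases n with _ | n
  · simpa [centralBinomSeries, coeff_derivative] using hrec 0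
  · simp only [map_add, coeff_C_mul, coeff_succ_X_mul, coeff_derivative, centralBinomSeries,
      coeff_mk]
    linear_combination (norm := (push_cast; ring)) hrec (n + 1)

theorem centralBinomSeries_sq_mul_one_sub : centralBinomSeries ^ 2 * (1 - 4 * X) = 1 := by
  -- `(D²(1 - 4X))' = 2D((1 - 4X)D' - 2D) = 0`.
  apply derivative.ext
  · have h4 : d⁄dX ℚ (4 : ℚ⟦X⟧) = 0 := derivative_C (r := 4)
    rw [Derivation.leibniz, Derivation.leibniz_pow, map_sub, derivative_one, Derivation.leibniz,
      derivative_X, h4]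
    simp only [smul_eq_mul]
    linear_combination (2 * centralBinomSeries) * derivative_centralBinomSeries
  · simp [centralBinomSeries]

end CentralBinom

section Walks

variable {A : Set (ℤ × ℤ)} {n : ℕ}

abbrev SlitWalk (A : Set (ℤ × ℤ)) (n : ℕ) (p : ℤ × ℤ) : Type :=
  {w : Fin (n + 1) → ℤ × ℤ // IsSlitWalk A n w ∧ w (Fin.last n) = p}

theorem IsSlitWalk.init {w : Fin (n + 2) → ℤ × ℤ} (hw : IsSlitWalk A (n + 1) w) :
    IsSlitWalk A n (Fin.init w) := by
  obtain ⟨h0, hstep, hH⟩ := hw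
  refine ⟨h0, fun m => ?_, fun m hm => hH m.castSucc hm⟩
  simpa only [Fin.init, Fin.succ_castSucc] using hstep m.castSucc

theorem IsSlitWalk.snoc {u : Fin (n + 1) → ℤ × ℤ} (hu : IsSlitWalk A n u) {q : ℤ × ℤ}
    (hq : q ∉ slitH) (hd : q - u (Fin.last n) ∈ A) : IsSlitWalk A (n + 1) (Fin.snoc u q) := by
  obtain ⟨h0, hstep, hH⟩ := hu
  refine ⟨by simpa using h0, fun m => ?_, fun m hm => ?_⟩
  · induction m using Fin.lastCases with
    | last => simpa using hd
    | cast m =>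
      rw [Fin.succ_castSucc, Fin.snoc_castSucc, Fin.snoc_castSucc]
      exact hstep m
  · induction m using Fin.lastCases with
    | last => simpa using hq
    | cast m => simpa using hH m hm

def slitWalkSuccEquiv {p : ℤ × ℤ} (hp : p ∉ slitH) :
    SlitWalk A (n + 1) p ≃ Σ d : A, SlitWalk A n (p - d) where
  toFun w := ⟨⟨p - w.1 (Fin.last n).castSucc, by
      simpa [← w.2.2] using w.2.1.2.1 (Fin.last n)⟩,
    ⟨Fin.init w.1, w.2.1.init, by simp [Fin.init, ← w.2.2]⟩⟩
  invFun w := ⟨Fin.snoc w.2.1 p, w.2.2.1.snoc hp (by simp [w.2.2.2]), by simp⟩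
  left_inv w := by
    ext1
    simp [← w.2.2]
  right_inv w := by
    refine Sigma.subtype_ext ?_ ?_
    · ext1; simp [w.2.2.2]
    · simp

instance SlitWalk.finite [Finite A] (p : ℤ × ℤ) : Finite (SlitWalk A n p) := by
  refine Finite.of_injective (fun w (m : Fin n) => (⟨_, w.2.1.2.1 m⟩ : A)) fun w w' h => ?_
  ext1
  funext m
  induction m using Fin.induction with
  | zero => rw [w.2.1.1, w'.2.1.1]
  | succ m ih =>
    have := congrArg Subtype.val (congrFun h m)
    simp only at this
    rw [← sub_add_cancel (w.1 m.succ) (w.1 m.castSucc), this, ih, sub_add_cancel]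

theorem slitCount_zero (i j : ℤ) : slitCount A i j 0 = if (i, j) = 0 then 1 else 0 := by
  split_ifs with h
  · have : Unique (SlitWalk A 0 (i, j)) :=
      { default := ⟨fun _ => 0, ⟨rfl, finZeroElim, fun m hm => absurd m.isLt (by omega)⟩, h.symm⟩
        uniq := fun w => Subtype.ext (funext fun m => by rw [Fin.fin_one_eq_zero m, w.2.1.1]; rfl) }
    exact Nat.card_unique
  · have : IsEmpty (SlitWalk A 0 (i, j)) := ⟨fun w => h (w.2.2.symm.trans w.2.1.1)⟩
    exact Nat.card_of_isEmpty

theorem slitCount_succ_of_mem {i j : ℤ} (hp : (i, j) ∈ slitH) : slitCount A i j (n + 1) = 0 := by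
  have : IsEmpty (SlitWalk A (n + 1) (i, j)) :=
    ⟨fun w => w.2.1.2.2 (Fin.last _) (by simp) (by rw [w.2.2]; exact hp)⟩
  exact Nat.card_of_isEmpty

theorem slitCount_succ_of_notMem (D : Finset (ℤ × ℤ)) {i j : ℤ} (hp : (i, j) ∉ slitH) :
    slitCount D i j (n + 1) = ∑ d ∈ D, slitCount D (i - d.1) (j - d.2) n := by
  rw [slitCount, Nat.card_congr (slitWalkSuccEquiv hp), Nat.card_sigma]
  exact Finset.sum_coe_sort D fun d => slitCount D (i - d.1) (j - d.2) n

end Walks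

section SlitWalkSeries

open AddMonoidAlgebra

structure IsSlitWalkSeries (P : AddMonoidAlgebra ℚ (ℤ × ℤ))
    (F : (AddMonoidAlgebra ℚ (ℤ × ℤ))⟦X⟧) : Prop where
  coeff_zero : coeff 0 F = 1
  coeff_succ_of_mem : ∀ n, ∀ p ∈ slitH, (coeff (n + 1) F).coeff p = 0
  coeff_succ_of_notMem : ∀ n, ∀ p ∉ slitH, (coeff (n + 1) F).coeff p = (P * coeff n F).coeff p

theorem IsSlitWalkSeries.eq {P : AddMonoidAlgebra ℚ (ℤ × ℤ)}
    {F G : (AddMonoidAlgebra ℚ (ℤ × ℤ))⟦X⟧} (hF : IsSlitWalkSeries P F)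
    (hG : IsSlitWalkSeries P G) : F = G := by
  ext n : 1
  induction n with
  | zero => rw [hF.coeff_zero, hG.coeff_zero]
  | succ n ih =>
    ext p
    by_cases hp : p ∈ slitH
    · rw [hF.coeff_succ_of_mem n p hp, hG.coeff_succ_of_mem n p hp]
    · rw [hF.coeff_succ_of_notMem n p hp, hG.coeff_succ_of_notMem n p hp, ih]

theorem isSlitWalkSeries_of_coeff_eq_slitCount (D : Finset (ℤ × ℤ))
    {S : (AddMonoidAlgebra ℚ (ℤ × ℤ))⟦X⟧}
    (hS : ∀ n i j, (coeff n S).coeff (i, j) = slitCount D i j n) :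
    IsSlitWalkSeries (∑ d ∈ D, single d 1) S where
  coeff_zero := by
    ext ⟨i, j⟩
    rw [hS, slitCount_zero, one_def, coeff_single, Finsupp.single_apply]
    simp [eq_comm]
  coeff_succ_of_mem n := fun ⟨i, j⟩ hp => by simp [hS, slitCount_succ_of_mem hp]
  coeff_succ_of_notMem n := fun ⟨i, j⟩ hp => by
    simp [hS, coeff_sum_single_mul, slitCount_succ_of_notMem D hp]

end SlitWalkSeries

-- `a` and `4t²u`, where `u = ((1 - R₁₆)/4t)²`, are the roots `(1 - 8t² ± R₁₆)/2` of
-- `Z² - (1 - 8t²)Z + 16t⁴`.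
theorem exists_conjugate_of_sq_eq_one_sub_sixteen_mul_X_sq (R16 : ℚ⟦X⟧)
    (hR0 : constantCoeff R16 = 1) (hR : R16 ^ 2 = 1 - 16 * X ^ 2) :
    ∃ a u : ℚ⟦X⟧, 2 * a = 1 - 8 * X ^ 2 + R16 ∧ a * u = 4 * X ^ 2 ∧
      a + 4 * X ^ 2 * u = 1 - 8 * X ^ 2 ∧ constantCoeff u = 0 := by
  obtain ⟨ρ, hρ⟩ : X ∣ 1 - R16 := X_dvd_iff.mpr (by simp [hR0])
  have h2 : (2 : ℚ⟦X⟧) * C 2⁻¹ = 1 := by rw [← map_ofNat C, ← map_mul]; norm_num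
  have h4 : (4 : ℚ⟦X⟧) * C 4⁻¹ = 1 := by rw [← map_ofNat C, ← map_mul]; norm_num
  set a := C 2⁻¹ * (1 - 8 * X ^ 2 + R16)
  set u := (C 4⁻¹ * ρ) ^ 2
  have ha : 2 * a = 1 - 8 * X ^ 2 + R16 := by linear_combination (1 - 8 * X ^ 2 + R16) * h2
  have hu : 16 * X ^ 2 * u = 2 - 2 * R16 - 16 * X ^ 2 := by
    linear_combination (X ^ 2 * ρ ^ 2 * (4 * C 4⁻¹ + 1)) * h4 - (1 - R16 + X * ρ) * hρ + hR
  have h32 : (32 : ℚ⟦X⟧) * X ^ 2 ≠ 0 :=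
    mul_ne_zero (fun h => by simpa [← map_ofNat C] using congrArg constantCoeff h)
      (pow_ne_zero 2 X_ne_zero)
  have hau : a * u = 4 * X ^ 2 := by
    refine mul_left_cancel₀ h32 ?_
    linear_combination (16 * X ^ 2 * u) * ha + (1 - 8 * X ^ 2 + R16) * hu - 2 * hR
  refine ⟨a, u, ha, hau, ?_, ?_⟩
  · linear_combination C 4⁻¹ * (2 * ha + hu) - (a + 4 * X ^ 2 * u - 1 + 8 * X ^ 2) * h4
  · simpa [a, hR0, one_add_one_eq_two] using congrArg constantCoeff hau

section Laurent

open AddMonoidAlgebra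
open LaurentPolynomial (T T_add T_pow T_zero)
open scoped LaurentPolynomial

noncomputable def xAddXInv : ℚ[T;T⁻¹] := T 1 + T (-1)

theorem xAddXInv_pow (n : ℕ) :
    xAddXInv ^ n = ∑ k ∈ Finset.range (n + 1), single (2 * k - n : ℤ) (n.choose k : ℚ) := by
  rw [xAddXInv, (Commute.all _ _).add_pow]
  refine Finset.sum_congr rfl fun k hk => ?_
  have hk : k ≤ n := Nat.lt_succ_iff.mp (Finset.mem_range.mp hk)
  rw [T_pow, T_pow, ← T_add, LaurentPolynomial.T, natCast_def, single_mul_single]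
  congr 1
  · push_cast [hk]
    ring
  · simp

theorem coeff_zero_xAddXInv_pow (n : ℕ) :
    (xAddXInv ^ n).coeff 0 = coeff n (expand 2 two_ne_zero centralBinomSeries) := by
  rw [xAddXInv_pow, coeff_expand, coeff_sum, Finset.sum_apply']
  simp only [coeff_single, Finsupp.single_apply]
  split_ifs with h
  · obtain ⟨m, rfl⟩ := h
    rw [Finset.sum_eq_single m]
    · simp [centralBinomSeries, Nat.centralBinom_eq_two_mul_choose]
    · intro k _ hk; rw [if_neg (by omega)]
    · intro hm; simp at hm; omega
  · exact Finset.sum_eq_zero fun k _ => if_neg (by omega)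

theorem xAddXInv_sq : xAddXInv ^ 2 = T 2 + 2 + T (-2) := by
  rw [xAddXInv, add_sq, T_pow, T_pow, mul_assoc, ← T_add]
  norm_num [T_zero]

/-- `[y⁰] 1/(1 - t(x + x⁻¹)(y + y⁻¹))`, counting unconstrained diagonal walks that end on the
horizontal axis. -/
noncomputable def axisReturnSeries : ℚ[T;T⁻¹]⟦X⟧ :=
  rescale xAddXInv (PowerSeries.map (algebraMap ℚ _) (expand 2 two_ne_zero centralBinomSeries))

theorem coeff_axisReturnSeries (n : ℕ) :
    coeff n axisReturnSeries = (xAddXInv ^ n).coeff 0 • xAddXInv ^ n := by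
  rw [axisReturnSeries, coeff_rescale, PowerSeries.coeff_map, ← coeff_zero_xAddXInv_pow,
    Algebra.smul_def, mul_comm]

theorem axisReturnSeries_sq_mul :
    axisReturnSeries ^ 2 * (1 - 4 * X ^ 2 * C (xAddXInv ^ 2)) = 1 := by
  have h := congrArg (fun f => rescale xAddXInv (PowerSeries.map (algebraMap ℚ ℚ[T;T⁻¹])
    (expand 2 two_ne_zero f))) centralBinomSeries_sq_mul_one_sub
  simp only [map_mul, map_pow, map_sub, map_one, map_ofNat, expand_X, map_X, rescale_X] at h
  rw [axisReturnSeries, map_pow]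
  linear_combination h

noncomputable abbrev nonposLaurent : NonUnitalSubalgebra ℚ ℚ[T;T⁻¹] :=
  supportedNonUnitalSubalgebra ℚ (Set.Iic 0) fun _ ha _ hb => Set.mem_Iic.mpr (add_nonpos ha hb)

noncomputable abbrev posLaurent : NonUnitalSubalgebra ℚ ℚ[T;T⁻¹] :=
  supportedNonUnitalSubalgebra ℚ (Set.Ici 1) fun _ ha _ hb => by
    simp only [Set.mem_Ici] at *; omega

theorem coeff_map_mul_C_T_mem_supported (f : ℚ⟦X⟧) {m : ℤ} {s : Set ℤ} (hm : m ∈ s) (n : ℕ) :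
    coeff n (PowerSeries.map (algebraMap ℚ ℚ[T;T⁻¹]) f * C (T m)) ∈ supported ℚ ℚ s := by
  rw [coeff_mul_C, PowerSeries.coeff_map, ← LaurentPolynomial.C_eq_algebraMap, mem_supported]
  intro k hk
  rw [Finset.mem_singleton.mp (LaurentPolynomial.support_C_mul_T _ _ hk)]
  exact hm

noncomputable def xInvFactor (a : ℚ⟦X⟧) : ℚ[T;T⁻¹]⟦X⟧ :=
  PowerSeries.map (algebraMap ℚ _) a - PowerSeries.map (algebraMap ℚ _) (4 * X ^ 2) * C (T (-2))

noncomputable def xPart (u : ℚ⟦X⟧) : ℚ[T;T⁻¹]⟦X⟧ :=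
  PowerSeries.map (algebraMap ℚ _) u * C (T 2)

theorem xInvFactor_mul_one_sub_xPart {a u : ℚ⟦X⟧} (hau : a * u = 4 * X ^ 2)
    (hsum : a + 4 * X ^ 2 * u = 1 - 8 * X ^ 2) :
    xInvFactor a * (1 - xPart u) = 1 - 4 * X ^ 2 * C (xAddXInv ^ 2) := by
  have hau' := congrArg (PowerSeries.map (algebraMap ℚ ℚ[T;T⁻¹])) hau
  have hsum' := congrArg (PowerSeries.map (algebraMap ℚ ℚ[T;T⁻¹])) hsum
  simp only [map_mul, map_add, map_sub, map_pow, map_one, map_ofNat, map_X] at hau' hsum'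
  have hT : C (T 2 : ℚ[T;T⁻¹]) * C (T (-2)) = 1 := by rw [← map_mul, ← T_add]; simp
  rw [xInvFactor, xPart, xAddXInv_sq, map_add, map_add, map_ofNat]
  simp only [map_mul, map_pow, map_ofNat, map_X]
  linear_combination hsum' - C (T 2) * hau' +
    4 * X ^ 2 * PowerSeries.map (algebraMap ℚ ℚ[T;T⁻¹]) u * hT

theorem coeff_xInvFactor_mem (a : ℚ⟦X⟧) (n : ℕ) : coeff n (xInvFactor a) ∈ nonposLaurent := by
  have h := coeff_map_mul_C_T_mem_supported a (m := 0) (s := Set.Iic 0) (Set.mem_Iic.mpr le_rfl) n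
  rw [T_zero, map_one, mul_one] at h
  rw [xInvFactor, map_sub]
  exact sub_mem h (coeff_map_mul_C_T_mem_supported _ (by norm_num) n)

theorem coeff_xPart_mem (u : ℚ⟦X⟧) (n : ℕ) : coeff n (xPart u) ∈ posLaurent :=
  coeff_map_mul_C_T_mem_supported u (by norm_num) n

theorem constantCoeff_xPart {u : ℚ⟦X⟧} (hu : constantCoeff u = 0) :
    constantCoeff (xPart u) = 0 := by
  simp [xPart, hu]

theorem coeff_mul_axisReturnSeries_mem {a u : ℚ⟦X⟧} (hau : a * u = 4 * X ^ 2)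
    (hsum : a + 4 * X ^ 2 * u = 1 - 8 * X ^ 2) (hu : constantCoeff u = 0) {V : ℚ[T;T⁻¹]⟦X⟧}
    (hV : V * V = xInvFactor a) (hV₀ : constantCoeff V = 1) :
    ∀ n : ℕ, 0 < n → coeff n (V * axisReturnSeries) ∈ posLaurent := by
  have hW₀ : constantCoeff axisReturnSeries = 1 := by
    rw [← coeff_zero_eq_constantCoeff_apply, coeff_axisReturnSeries]
    simp
  have hE : V * axisReturnSeries * (V * axisReturnSeries) * (1 - xPart u) = 1 := by
    calc _ = V * V * (1 - xPart u) * axisReturnSeries ^ 2 := by ring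
      _ = 1 := by
        rw [hV, xInvFactor_mul_one_sub_xPart hau hsum, mul_comm, axisReturnSeries_sq_mul]
  exact coeff_mem_of_mul_self_eq posLaurent rfl (by simp [hV₀, hW₀])
    (coeff_mem_of_mul_one_sub_eq_one posLaurent.toNonUnitalSubring hE (constantCoeff_xPart hu)
      (coeff_xPart_mem u))

end Laurent

section Plane

open AddMonoidAlgebra
open scoped LaurentPolynomial

noncomputable abbrev embedX : ℚ[T;T⁻¹] →+* AddMonoidAlgebra ℚ (ℤ × ℤ) :=
  mapDomainRingHom ℚ (AddMonoidHom.inl ℤ ℤ)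

noncomputable abbrev embedY : ℚ[T;T⁻¹] →+* AddMonoidAlgebra ℚ (ℤ × ℤ) :=
  mapDomainRingHom ℚ (AddMonoidHom.inr ℤ ℤ)

theorem coeff_embedX_mul_embedY (f g : ℚ[T;T⁻¹]) (i j : ℤ) :
    (embedX f * embedY g).coeff (i, j) = f.coeff i * g.coeff j :=
  coeff_mapDomain_inl_mul_mapDomain_inr f g i j

theorem coeff_embedX (f : ℚ[T;T⁻¹]) (i j : ℤ) :
    (embedX f).coeff (i, j) = if j = 0 then f.coeff i else 0 := by
  have h := coeff_embedX_mul_embedY f 1 i j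
  rw [map_one, mul_one, one_def, coeff_single, Finsupp.single_apply] at h
  rw [h]
  by_cases hj : j = 0 <;> simp [hj, eq_comm (a := (0 : ℤ))]

noncomputable def diagStepPoly : AddMonoidAlgebra ℚ (ℤ × ℤ) := embedX xAddXInv * embedY xAddXInv

/-- `V(x; t) / (1 - t(x + x⁻¹)(y + y⁻¹))`, the candidate for the complete generating function. -/
noncomputable def slitSeries (V : ℚ[T;T⁻¹]⟦X⟧) : (AddMonoidAlgebra ℚ (ℤ × ℤ))⟦X⟧ :=
  PowerSeries.map embedX V * rescale diagStepPoly (mk 1)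

theorem one_sub_X_mul_slitSeries (V : ℚ[T;T⁻¹]⟦X⟧) :
    (1 - X * C diagStepPoly) * slitSeries V = PowerSeries.map embedX V := by
  have h := congrArg (rescale diagStepPoly)
    (mk_one_mul_one_sub_eq_one (S := AddMonoidAlgebra ℚ (ℤ × ℤ)))
  rw [map_mul, map_sub, map_one, rescale_X] at h
  rw [slitSeries]
  linear_combination PowerSeries.map embedX V * h

theorem coeff_slitSeries_axis (V : ℚ[T;T⁻¹]⟦X⟧) (n : ℕ) (i : ℤ) :
    (coeff n (slitSeries V)).coeff (i, 0) = (coeff n (V * axisReturnSeries)).coeff i := by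
  rw [slitSeries, PowerSeries.coeff_mul, PowerSeries.coeff_mul, coeff_sum, Finset.sum_apply',
    coeff_sum, Finset.sum_apply']
  refine Finset.sum_congr rfl fun p _ => ?_
  rw [coeff_rescale, coeff_mk, Pi.one_apply, mul_one, PowerSeries.coeff_map, coeff_axisReturnSeries,
    diagStepPoly, mul_pow, ← map_pow, ← map_pow, ← mul_assoc, ← map_mul, coeff_embedX_mul_embedY,
    mul_smul_comm, AddMonoidAlgebra.coeff_smul, Finsupp.smul_apply, smul_eq_mul, mul_comm]

theorem isSlitWalkSeries_slitSeries {V : ℚ[T;T⁻¹]⟦X⟧} (hV₀ : constantCoeff V = 1)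
    (hV : ∀ n : ℕ, 0 < n → coeff n V ∈ nonposLaurent)
    (hVW : ∀ n : ℕ, 0 < n → coeff n (V * axisReturnSeries) ∈ posLaurent) :
    IsSlitWalkSeries diagStepPoly (slitSeries V) where
  coeff_zero := by
    rw [slitSeries, coeff_zero_eq_constantCoeff_apply, map_mul, constantCoeff_map, hV₀,
      ← coeff_zero_eq_constantCoeff_apply, coeff_rescale]
    simp
  coeff_succ_of_mem n := by
    rintro ⟨i, j⟩ ⟨rfl, hi⟩
    rw [coeff_slitSeries_axis]
    refine (mem_supported' ..).mp (hVW (n + 1) n.succ_pos) i ?_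
    simp only [Set.mem_Ici, not_le]
    omega
  coeff_succ_of_notMem n := by
    rintro ⟨i, j⟩ hp
    have h := congrArg (PowerSeries.coeff (n + 1)) (one_sub_X_mul_slitSeries V)
    rw [sub_mul, one_mul, map_sub, mul_assoc, coeff_succ_X_mul, coeff_C_mul] at h
    rw [eq_add_of_sub_eq h, coeff_add, Finsupp.add_apply, PowerSeries.coeff_map, coeff_embedX]
    split_ifs with hj
    · rw [(mem_supported' ..).mp (hV (n + 1) n.succ_pos) i (fun hi => hp ⟨hj, hi⟩), zero_add]
    · rw [zero_add]

end Plane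

section Diagonal

open AddMonoidAlgebra
open scoped LaurentPolynomial

theorem diagSteps_eq : diagSteps = ↑({(1, 1), (1, -1), (-1, 1), (-1, -1)} : Finset (ℤ × ℤ)) := by
  simp [diagSteps]

theorem diagStepPoly_eq :
    diagStepPoly = (single (1, 0) 1 + single (-1, 0) 1) * (single (0, 1) 1 + single (0, -1) 1) := by
  simp only [diagStepPoly, xAddXInv, LaurentPolynomial.T, map_add, mapDomainRingHom_apply,
    mapDomain_single, AddMonoidHom.inl_apply, AddMonoidHom.inr_apply]

theorem diagStepPoly_eq_sum :
    diagStepPoly = ∑ d ∈ ({(1, 1), (1, -1), (-1, 1), (-1, -1)} : Finset (ℤ × ℤ)), single d 1 := by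
  rw [diagStepPoly_eq, Finset.sum_insert (by decide), Finset.sum_insert (by decide),
    Finset.sum_insert (by decide), Finset.sum_singleton]
  simp only [add_mul, mul_add, single_mul_single]
  norm_num
  abel

theorem isSlitWalkSeries_diagStepPoly {S : (AddMonoidAlgebra ℚ (ℤ × ℤ))⟦X⟧}
    (hS : ∀ n i j, (coeff n S).coeff (i, j) = slitCount diagSteps i j n) :
    IsSlitWalkSeries diagStepPoly S := by
  rw [diagStepPoly_eq_sum]
  rw [diagSteps_eq] at hS
  exact isSlitWalkSeries_of_coeff_eq_slitCount _ hS

theorem two_mul_map_embedX_xInvFactor {a R16 : ℚ⟦X⟧} (ha : 2 * a = 1 - 8 * X ^ 2 + R16) :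
    2 * PowerSeries.map embedX (xInvFactor a) =
      1 - 8 * X ^ 2 * C (1 + single (-2, 0) 1) + PowerSeries.map (algebraMap ℚ _) R16 := by
  have hmap (f : ℚ⟦X⟧) : PowerSeries.map embedX (PowerSeries.map (algebraMap ℚ ℚ[T;T⁻¹]) f) =
      PowerSeries.map (algebraMap ℚ _) f := by
    rw [← RingHom.comp_apply, ← PowerSeries.map_comp, mapDomainRingHom_comp_algebraMap]
  have ha' := congrArg (PowerSeries.map (algebraMap ℚ (AddMonoidAlgebra ℚ (ℤ × ℤ)))) ha
  simp only [map_mul, map_add, map_sub, map_pow, map_one, map_ofNat, map_X] at ha'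
  rw [xInvFactor, map_sub, map_mul, hmap, hmap, PowerSeries.map_C]
  simp only [map_mul, map_pow, map_ofNat, map_X, map_add, map_one, LaurentPolynomial.T,
    mapDomainRingHom_apply, mapDomain_single, AddMonoidHom.inl_apply]
  linear_combination ha'

end Diagonal

/-- the complete generating function for walks on the slit plane with
diagonal steps satisfies `2·((1 − t(x+x⁻¹)(y+y⁻¹))·S)² = 1 − 8t²(1+x⁻²) + R₁₆`,
where `R₁₆² = 1 − 16t²`, `R₁₆(0) = 1`. Here `x^i y^j` is
`AddMonoidAlgebra.single (i,j) 1` in `ℚ[x,x⁻¹,y,y⁻¹] = AddMonoidAlgebra ℚ (ℤ × ℤ)`. -/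
theorem diag_slit_plane_complete_generating_function
    (S : PowerSeries (AddMonoidAlgebra ℚ (ℤ × ℤ)))
    (hS : ∀ (n : ℕ) (i j : ℤ),
      (PowerSeries.coeff (R := AddMonoidAlgebra ℚ (ℤ × ℤ)) n S).coeff (i, j)
        = (slitCount diagSteps i j n : ℚ))
    (R16 : PowerSeries ℚ)
    (hR0 : PowerSeries.constantCoeff (R := ℚ) R16 = 1)
    (hR : R16 ^ 2 = 1 - 16 * PowerSeries.X ^ 2) :
    2 * ((1 - PowerSeries.X * PowerSeries.C (R := AddMonoidAlgebra ℚ (ℤ × ℤ))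
          ((AddMonoidAlgebra.single ((1 : ℤ), (0 : ℤ)) (1 : ℚ)
              + AddMonoidAlgebra.single ((-1 : ℤ), (0 : ℤ)) (1 : ℚ))
            * (AddMonoidAlgebra.single ((0 : ℤ), (1 : ℤ)) (1 : ℚ)
              + AddMonoidAlgebra.single ((0 : ℤ), (-1 : ℤ)) (1 : ℚ)))) * S) ^ 2
      = 1 - 8 * PowerSeries.X ^ 2 * PowerSeries.C (R := AddMonoidAlgebra ℚ (ℤ × ℤ))
              (1 + AddMonoidAlgebra.single ((-2 : ℤ), (0 : ℤ)) (1 : ℚ))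
          + PowerSeries.map (algebraMap ℚ (AddMonoidAlgebra ℚ (ℤ × ℤ))) R16 := by
  obtain ⟨a, u, ha, hau, hsum, hu⟩ :=
    exists_conjugate_of_sq_eq_one_sub_sixteen_mul_X_sq R16 hR0 hR
  have ha₀ : constantCoeff a = 1 := by simpa using congrArg constantCoeff hsum
  obtain ⟨V, hV, hV₀⟩ := exists_mul_self_eq_of_constantCoeff_eq_one (F := xInvFactor a)
    (by rw [← map_ofNat (algebraMap ℚ (LaurentPolynomial ℚ))]; exact (isUnit_of_invertible _).map _)
    (by simp [xInvFactor, ha₀])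
  have hT : IsSlitWalkSeries diagStepPoly (slitSeries V) :=
    isSlitWalkSeries_slitSeries hV₀
      (coeff_mem_of_mul_self_eq nonposLaurent hV hV₀ fun n _ => coeff_xInvFactor_mem a n)
      (coeff_mul_axisReturnSeries_mem hau hsum hu hV hV₀)
  rw [← diagStepPoly_eq, (isSlitWalkSeries_diagStepPoly hS).eq hT, one_sub_X_mul_slitSeries,
    ← map_pow, sq, hV]
  exact two_mul_map_embedX_xInvFactor ha
end

section
/- (Factorization lemma.) Let δ(x;t) be a polynomial in t with coefficients in the Laurent polynomial ring ℝ[x,x⁻¹], such that δ(x;0) = 1. Then there exists a unique triple (D, Δ, Δ̄) of formal power series in t satisfying: δ = D·Δ·Δ̄ (as series in t with Laurent-polynomial coefficients); the coefficients of D lie in ℝ; the coefficients of Δ lie in ℝ[x]; the coefficients of Δ̄ lie in ℝ[x⁻¹]; and D(0) = 1, Δ(x;0) = Δ̄(x⁻¹;0) = 1, and the constant terms in x of Δ and of Δ̄ are both 1 (i.e. Δ(0;t) = Δ̄ evaluated at x⁻¹=0 equal 1). Moreover, Δ is a polynomial in x and Δ̄ is a polynomial in x⁻¹ (i.e. the degrees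 in x, resp. x⁻¹, of the coefficients are uniformly bounded). -/
open PowerSeries

/-- The canonical factorization conditions of the factorization lemma:
`δ = D·Δ·Δ̄` (as power series in `t` with coefficients in `ℝ[x,x⁻¹]`), where
`D` has coefficients in `ℝ`, `Δ` has coefficients in `ℝ[x]` (embedded via `x ↦ T 1`),
`Δ̄` has coefficients in `ℝ[x⁻¹]` (embedded via `x⁻¹ ↦ T (-1)`), with the
normalizations `D(0) = 1`, `Δ(x;0) = Δ̄(x⁻¹;0) = 1`, `Δ(0;t) = Δ̄(0;t) = 1`. -/
def FactorCond (δ : Polynomial (LaurentPolynomial ℝ))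
    (D : PowerSeries ℝ) (Δ : PowerSeries (Polynomial ℝ))
    (Δb : PowerSeries (Polynomial ℝ)) : Prop :=
  (PowerSeries.mk fun n => δ.coeff n)
      = PowerSeries.map (algebraMap ℝ (LaurentPolynomial ℝ)) D
        * PowerSeries.map (Polynomial.toLaurent (R := ℝ)) Δ
        * PowerSeries.map
            ((Polynomial.aeval (LaurentPolynomial.T (-1)) :
              Polynomial ℝ →ₐ[ℝ] LaurentPolynomial ℝ) : Polynomial ℝ →+* LaurentPolynomial ℝ) Δb
    ∧ PowerSeries.constantCoeff (R := ℝ) D = 1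
    ∧ PowerSeries.constantCoeff (R := Polynomial ℝ) Δ = 1
    ∧ PowerSeries.constantCoeff (R := Polynomial ℝ) Δb = 1
    ∧ PowerSeries.map (Polynomial.constantCoeff (R := ℝ)) Δ = 1
    ∧ PowerSeries.map (Polynomial.constantCoeff (R := ℝ)) Δb = 1

/-!
Write `ℝ[x,x⁻¹] = ℝ ⊕ x ℝ[x] ⊕ x⁻¹ ℝ[x⁻¹]`. Since `D`, `Δ`, `Δ̄` all start with `1`, the `tⁿ`
coefficient of `D Δ Δ̄` is `Dₙ + Δₙ + Δ̄ₙ` plus a term built from lower coefficients only;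
equating it with `δₙ` and splitting along the direct sum determines `Dₙ`, `Δₙ`, `Δ̄ₙ` uniquely,
by recursion on `n`.

For the degree bound, choose `M` with `x⁻ᴹ δ` having coefficients in `ℝ[x⁻¹]`. Then
`x⁻ᴹ Δ = x⁻ᴹ δ · D⁻¹ · Δ̄⁻¹` is a product of series with coefficients in `ℝ[x⁻¹]`, so every `Δₙ`
has degree at most `M`. The bound for `Δ̄` follows by applying `x ↦ x⁻¹`, which swaps the roles
of `Δ` and `Δ̄`.
-/

open scoped Polynomial LaurentPolynomial

namespace LaurentPolynomial

open Polynomial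

variable {R : Type*} [CommRing R]

theorem coeff_toLaurent_natCast (p : R[X]) (n : ℕ) : (toLaurent p).coeff n = p.coeff n := by
  rw [coeff_toLaurent]
  exact Finsupp.mapDomain_apply Nat.castEmbedding.injective _ _

theorem coeff_toLaurent_zero (p : R[X]) : (toLaurent p).coeff 0 = p.coeff 0 :=
  coeff_toLaurent_natCast p 0

theorem coeff_toLaurent_of_neg (p : R[X]) {k : ℤ} (hk : k < 0) : (toLaurent p).coeff k = 0 := by
  rw [coeff_toLaurent]
  refine Finsupp.mapDomain_of_notMem_range _ _ ?_
  rintro ⟨m, rfl⟩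
  exact absurd hk (by simp)

theorem coeff_mul_T (f : R[T;T⁻¹]) (m k : ℤ) : (f * T m).coeff k = f.coeff (k - m) := by
  rw [T, AddMonoidAlgebra.coeff_mul_single_apply, mul_one, sub_eq_add_neg]

noncomputable abbrev toLaurentInv : R[X] →+* R[T;T⁻¹] :=
  (aeval (T (-1)) : R[X] →ₐ[R] R[T;T⁻¹])

theorem toLaurentInv_apply (p : R[X]) : toLaurentInv p = invert (toLaurent p) := by
  change aeval (T (-1)) p = _
  rw [← toLaurentAlg_apply, ← AlgEquiv.coe_toAlgHom, ← AlgHom.comp_apply]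
  congr 1
  exact algHom_ext (by simp)

theorem coeff_trunc (f : R[T;T⁻¹]) (n : ℕ) : (trunc f).coeff n = f.coeff n := rfl

/-- The part `∑_{n > 0} fₙ xⁿ` of a Laurent polynomial `f`. -/
noncomputable def posPart (f : R[T;T⁻¹]) : R[X] := trunc f - Polynomial.C (f.coeff 0)

/-- The part `∑_{n > 0} f₋ₙ xⁿ`, so that `f = f₀ + posPart f + (negPart f)(x⁻¹)`. -/
noncomputable def negPart (f : R[T;T⁻¹]) : R[X] := posPart (invert f)

/-- The decomposition `R[T;T⁻¹] = R ⊕ x R[x] ⊕ x⁻¹ R[x⁻¹]`. -/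
noncomputable def split (f : R[T;T⁻¹]) : R × R[X] × R[X] := (f.coeff 0, posPart f, negPart f)

theorem coeff_posPart (f : R[T;T⁻¹]) (n : ℕ) :
    (posPart f).coeff n = if n = 0 then 0 else f.coeff n := by
  rw [posPart, coeff_sub, Polynomial.coeff_C, coeff_trunc]
  split_ifs with h <;> simp [h]

theorem coeff_negPart (f : R[T;T⁻¹]) (n : ℕ) :
    (negPart f).coeff n = if n = 0 then 0 else f.coeff (-n) := by
  simp [negPart, coeff_posPart]

section Sum

variable (c : R) (p q : R[X])

theorem coeff_C_add_toLaurent_add_invert_zero :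
    (C c + toLaurent p + invert (toLaurent q)).coeff 0 = c + p.coeff 0 + q.coeff 0 := by
  simp only [AddMonoidAlgebra.coeff_add, Finsupp.add_apply, C_apply, invert_apply, neg_zero,
    coeff_toLaurent_zero, if_pos]

theorem coeff_C_add_toLaurent_add_invert_natCast {n : ℕ} (hn : n ≠ 0) :
    (C c + toLaurent p + invert (toLaurent q)).coeff n = p.coeff n := by
  simp only [AddMonoidAlgebra.coeff_add, Finsupp.add_apply, C_apply, invert_apply,
    coeff_toLaurent_natCast, coeff_toLaurent_of_neg q (k := -n) (by omega), Nat.cast_eq_zero, hn,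
    if_false, zero_add, add_zero]

theorem coeff_C_add_toLaurent_add_invert_neg_natCast {n : ℕ} (hn : n ≠ 0) :
    (C c + toLaurent p + invert (toLaurent q)).coeff (-n) = q.coeff n := by
  simp only [AddMonoidAlgebra.coeff_add, Finsupp.add_apply, C_apply, invert_apply, neg_neg,
    coeff_toLaurent_natCast, coeff_toLaurent_of_neg p (k := -n) (by omega), neg_eq_zero,
    Nat.cast_eq_zero, hn, if_false, zero_add]

end Sum

theorem C_add_toLaurent_add_invert_split (f : R[T;T⁻¹]) :
    C (split f).1 + toLaurent (split f).2.1 + invert (toLaurent (split f).2.2) = f := by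
  ext k
  obtain ⟨n, rfl | rfl⟩ := Int.eq_nat_or_neg k <;> rcases eq_or_ne n 0 with rfl | hn
  · rw [Nat.cast_zero, coeff_C_add_toLaurent_add_invert_zero]
    simp [split, coeff_posPart, coeff_negPart]
  · rw [coeff_C_add_toLaurent_add_invert_natCast _ _ _ hn, split, coeff_posPart, if_neg hn]
  · rw [Nat.cast_zero, neg_zero, coeff_C_add_toLaurent_add_invert_zero]
    simp [split, coeff_posPart, coeff_negPart]
  · rw [coeff_C_add_toLaurent_add_invert_neg_natCast _ _ _ hn, split, coeff_negPart, if_neg hn]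

theorem eq_split_iff {f : R[T;T⁻¹]} {c : R} {p q : R[X]} :
    (c, p, q) = split f ↔
      p.coeff 0 = 0 ∧ q.coeff 0 = 0 ∧ C c + toLaurent p + invert (toLaurent q) = f := by
  constructor
  · intro h
    simp only [split, Prod.mk.injEq] at h
    obtain ⟨rfl, rfl, rfl⟩ := h
    exact ⟨by simp [coeff_posPart], by simp [coeff_negPart], C_add_toLaurent_add_invert_split f⟩
  · rintro ⟨hp, hq, rfl⟩
    simp only [split, Prod.mk.injEq]
    refine ⟨by rw [coeff_C_add_toLaurent_add_invert_zero, hp, hq, add_zero, add_zero], ?_, ?_⟩ <;>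
      ext n <;> rcases eq_or_ne n 0 with rfl | hn
    · simp [coeff_posPart, hp]
    · rw [coeff_posPart, if_neg hn, coeff_C_add_toLaurent_add_invert_natCast _ _ _ hn]
    · simp [coeff_negPart, hq]
    · rw [coeff_negPart, if_neg hn, coeff_C_add_toLaurent_add_invert_neg_natCast _ _ _ hn]

theorem exists_mul_T_neg_mem_range (f : R[T;T⁻¹]) :
    ∃ m : ℕ, ∀ M ≥ m, f * T (-M) ∈ toLaurentInv.range := by
  obtain ⟨m, p, hp⟩ := exists_T_pow (invert f)
  refine ⟨m, fun M hM ↦ ⟨p * Polynomial.X ^ (M - m), ?_⟩⟩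
  have hX : toLaurentInv (Polynomial.X : R[X]) = T (-1) := by simp
  rw [map_mul, map_pow, hX, toLaurentInv_apply, hp, map_mul, invert_T, T_pow, involutive_invert,
    mul_T_assoc]
  congr 2
  push_cast [hM]
  ring

theorem natDegree_le_of_toLaurent_mul_T_neg_mem {p : R[X]} {M : ℕ}
    (h : toLaurent p * T (-M) ∈ toLaurentInv.range) : p.natDegree ≤ M := by
  obtain ⟨q, hq⟩ := h
  refine Polynomial.natDegree_le_iff_coeff_eq_zero.2 fun k hk ↦ ?_
  calc p.coeff k = (toLaurent p * T (-M)).coeff (k - M) := by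
        rw [coeff_mul_T, sub_neg_eq_add, sub_add_cancel, coeff_toLaurent_natCast]
    _ = (toLaurent q).coeff (M - k) := by rw [← hq, toLaurentInv_apply, invert_apply, neg_sub]
    _ = 0 := coeff_toLaurent_of_neg q (by omega)

end LaurentPolynomial

open LaurentPolynomial in
theorem Polynomial.exists_coeff_mul_T_neg_mem_range {R : Type*} [CommRing R] (δ : R[T;T⁻¹][X]) :
    ∃ M : ℕ, ∀ n, δ.coeff n * T (-M) ∈ toLaurentInv.range := by
  choose m hm using fun n ↦ exists_mul_T_neg_mem_range (δ.coeff n)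
  refine ⟨δ.support.sup m, fun n ↦ ?_⟩
  by_cases hn : n ∈ δ.support
  · exact hm n _ (Finset.le_sup hn)
  · rw [Polynomial.notMem_support_iff.1 hn, zero_mul]
    exact zero_mem _

theorem existsUnique_eq_of_causal {A : Type*} [Nonempty A] (F : ℕ → (ℕ → A) → A)
    (hF : ∀ n g g', (∀ m < n, g m = g' m) → F n g = F n g') :
    ∃! g : ℕ → A, ∀ n, g n = F n g := by
  let g : ℕ → A := Nat.strongRec fun n ih ↦
    F n fun m ↦ if h : m < n then ih m h else Classical.arbitrary A
  refine ⟨g, fun n ↦ ?_, fun g' hg' ↦ funext fun n ↦ ?_⟩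
  · rw [show g n = _ from Nat.strongRec_eq _ n]
    exact hF _ _ _ fun m hm ↦ by simp [hm, g]
  · induction n using Nat.strong_induction_on with
    | _ n ih =>
      rw [hg' n, show g n = _ from Nat.strongRec_eq _ n]
      exact hF _ _ _ fun m hm ↦ by simp [hm, ih m hm, g]

namespace PowerSeries

variable {R : Type*} [CommSemiring R]

theorem coeff_mul_mul_eq_add_coeff_trunc {f g h : R⟦X⟧} (hf : constantCoeff f = 1)
    (hg : constantCoeff g = 1) (hh : constantCoeff h = 1) {n : ℕ} (hn : n ≠ 0) :
    coeff n (f * g * h) = coeff n f + coeff n g + coeff n h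
      + coeff n ((trunc n f : R⟦X⟧) * (trunc n g : R⟦X⟧) * (trunc n h : R⟦X⟧)) := by
  have expand (a b c A B C : R⟦X⟧) : (X ^ n * a + A) * (X ^ n * b + B) * (X ^ n * c + C)
      = A * B * C + X ^ n * (a * B * C + A * b * C + A * B * c
        + X ^ n * (a * b * C + a * B * c + A * b * c + X ^ n * (a * b * c))) := by ring
  have htrunc (φ : R⟦X⟧) : constantCoeff (trunc n φ : R⟦X⟧) = constantCoeff φ := by
    rw [← coeff_zero_eq_constantCoeff_apply, ← coeff_zero_eq_constantCoeff_apply,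
      Polynomial.coeff_coe, coeff_trunc, if_pos (Nat.pos_of_ne_zero hn)]
  have hshift (φ : R⟦X⟧) : constantCoeff (mk fun i ↦ coeff (i + n) φ) = coeff n φ := by
    rw [← coeff_zero_eq_constantCoeff_apply, coeff_mk, zero_add]
  conv_lhs => rw [eq_X_pow_mul_shift_add_trunc n f, eq_X_pow_mul_shift_add_trunc n g,
    eq_X_pow_mul_shift_add_trunc n h, expand, map_add, coeff_X_pow_mul', if_pos le_rfl,
    Nat.sub_self]
  simp only [coeff_zero_eq_constantCoeff, map_add, map_mul, map_pow, constantCoeff_X, zero_pow hn,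
    htrunc, hshift, hf, hg, hh]
  ring

theorem trunc_mk_congr {R : Type*} [Semiring R] {n : ℕ} {a b : ℕ → R} (h : ∀ m < n, a m = b m) :
    trunc n (mk a) = trunc n (mk b) := by
  ext m
  simp only [coeff_trunc, coeff_mk]
  split_ifs with hm
  exacts [h m hm, rfl]

theorem mem_range_map_iff {R S : Type*} [Ring R] [Ring S] {φ : R →+* S} {f : S⟦X⟧} :
    f ∈ (map φ).range ↔ ∀ n, coeff n f ∈ φ.range := by
  constructor
  · rintro ⟨g, rfl⟩ n
    exact ⟨coeff n g, (coeff_map φ n g).symm⟩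
  · intro h
    choose a ha using h
    exact ⟨mk a, by ext n; simp [ha]⟩

end PowerSeries

open LaurentPolynomial (T invert toLaurentInv)
open Polynomial (toLaurent)

section Factorization

variable {R : Type*} [CommRing R]

noncomputable def factorProd (D : PowerSeries R) (Δ Δb : PowerSeries R[X]) : PowerSeries R[T;T⁻¹] :=
  map (algebraMap R R[T;T⁻¹]) D * map (toLaurent (R := R)) Δ * map toLaurentInv Δb

theorem coeff_factorProd {D : PowerSeries R} {Δ Δb : PowerSeries R[X]} (hD : constantCoeff D = 1)
    (hΔ : constantCoeff Δ = 1) (hΔb : constantCoeff Δb = 1) {n : ℕ} (hn : n ≠ 0) :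
    coeff n (factorProd D Δ Δb) =
      LaurentPolynomial.C (coeff n D) + toLaurent (coeff n Δ) + invert (toLaurent (coeff n Δb))
        + coeff n (factorProd (trunc n D) (trunc n Δ) (trunc n Δb)) := by
  rw [factorProd, coeff_mul_mul_eq_add_coeff_trunc
    (by simp [← coeff_zero_eq_constantCoeff_apply, hD])
    (by simp [← coeff_zero_eq_constantCoeff_apply, hΔ])
    (by simp [← coeff_zero_eq_constantCoeff_apply, hΔb]) hn]
  simp only [coeff_map, trunc_map, Polynomial.polynomial_map_coe,
    LaurentPolynomial.toLaurentInv_apply, LaurentPolynomial.C_eq_algebraMap, factorProd]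

theorem constantCoeff_factorProd {D : PowerSeries R} {Δ Δb : PowerSeries R[X]}
    (hD : constantCoeff D = 1) (hΔ : constantCoeff Δ = 1) (hΔb : constantCoeff Δb = 1) :
    constantCoeff (factorProd D Δ Δb) = 1 := by
  simp only [factorProd, map_mul, ← coeff_zero_eq_constantCoeff_apply, coeff_map]
  simp [hD, hΔ, hΔb]

/-- The `n`-th coefficients of `D`, `Δ`, `Δ̄` forced by `δ = D Δ Δ̄` and the lower coefficients. -/
noncomputable def forcedCoeffs (δ : R[T;T⁻¹][X]) (n : ℕ)
    (P : PowerSeries R × PowerSeries R[X] × PowerSeries R[X]) : R × R[X] × R[X] :=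
  if n = 0 then (1, 1, 1)
  else LaurentPolynomial.split
    (δ.coeff n - coeff n (factorProd (trunc n P.1) (trunc n P.2.1) (trunc n P.2.2)))

noncomputable def coeffsEquiv :
    (PowerSeries R × PowerSeries R[X] × PowerSeries R[X]) ≃ (ℕ → R × R[X] × R[X]) where
  toFun P n := (coeff n P.1, coeff n P.2.1, coeff n P.2.2)
  invFun g := (mk fun n ↦ (g n).1, mk fun n ↦ (g n).2.1, mk fun n ↦ (g n).2.2)
  left_inv P := by ext <;> simp
  right_inv g := by ext <;> simp

theorem map_invert_factorProd (D : PowerSeries R) (Δ Δb : PowerSeries R[X]) :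
    map (invert (R := R) : R[T;T⁻¹] →+* R[T;T⁻¹]) (factorProd D Δ Δb) = factorProd D Δb Δ := by
  set ι := (invert (R := R) : R[T;T⁻¹] →+* R[T;T⁻¹])
  have hC : ι.comp (algebraMap R R[T;T⁻¹]) = algebraMap R _ := RingHom.ext invert.commutes
  have hpos : ι.comp toLaurent = toLaurentInv :=
    RingHom.ext fun p ↦ (LaurentPolynomial.toLaurentInv_apply p).symm
  have hneg : ι.comp toLaurentInv = toLaurent :=
    RingHom.ext fun p ↦ by
      rw [RingHom.comp_apply, LaurentPolynomial.toLaurentInv_apply]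
      exact LaurentPolynomial.involutive_invert _
  simp only [factorProd, map_mul, ← RingHom.comp_apply, ← map_comp, hC, hpos, hneg]
  ring

end Factorization

theorem factorCond_iff {δ : (LaurentPolynomial ℝ)[X]} (hδ : δ.coeff 0 = 1) {D : PowerSeries ℝ}
    {Δ Δb : PowerSeries ℝ[X]} :
    FactorCond δ D Δ Δb ↔ ∀ n, coeffsEquiv (D, Δ, Δb) n = forcedCoeffs δ n (D, Δ, Δb) := by
  have hδ' (n : ℕ) : coeff n (mk fun n ↦ δ.coeff n) = δ.coeff n := coeff_mk n _
  constructor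
  · rintro ⟨hprod, hD, hΔ, hΔb, hΔ0, hΔb0⟩ n
    rcases eq_or_ne n 0 with rfl | hn
    · simp [coeffsEquiv, forcedCoeffs, hD, hΔ, hΔb]
    · rw [forcedCoeffs, if_neg hn, coeffsEquiv, Equiv.coe_fn_mk, LaurentPolynomial.eq_split_iff]
      refine ⟨by simpa [hn] using congr(coeff n $hΔ0), by simpa [hn] using congr(coeff n $hΔb0), ?_⟩
      rw [eq_sub_iff_add_eq, ← coeff_factorProd hD hΔ hΔb hn, ← hδ', hprod]
      rfl
  · intro h
    obtain ⟨hD, hΔ, hΔb⟩ : constantCoeff D = 1 ∧ constantCoeff Δ = 1 ∧ constantCoeff Δb = 1 := by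
      simpa [coeffsEquiv, forcedCoeffs] using h 0
    have hsplit (n : ℕ) (hn : n ≠ 0) :=
      LaurentPolynomial.eq_split_iff.1 (by simpa [coeffsEquiv, forcedCoeffs, hn] using h n)
    refine ⟨?_, hD, hΔ, hΔb, ?_, ?_⟩
    · change mk _ = factorProd D Δ Δb
      refine PowerSeries.ext fun n ↦ ?_
      rcases eq_or_ne n 0 with rfl | hn
      · rw [hδ', hδ, coeff_zero_eq_constantCoeff_apply, constantCoeff_factorProd hD hΔ hΔb]
      · rw [hδ', coeff_factorProd hD hΔ hΔb hn, (hsplit n hn).2.2, sub_add_cancel]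
    all_goals
      refine PowerSeries.ext fun n ↦ ?_
      rcases eq_or_ne n 0 with rfl | hn
      · simp [hΔ, hΔb]
      · simp [hn, (hsplit n hn).1, (hsplit n hn).2.1]

theorem existsUnique_factorCond {δ : (LaurentPolynomial ℝ)[X]} (hδ : δ.coeff 0 = 1) :
    ∃! P : PowerSeries ℝ × PowerSeries ℝ[X] × PowerSeries ℝ[X], FactorCond δ P.1 P.2.1 P.2.2 := by
  rw [coeffsEquiv.existsUnique_congr (q := fun g ↦ ∀ n, g n = forcedCoeffs δ n (coeffsEquiv.symm g))
    fun P ↦ by simpa using factorCond_iff hδ]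
  refine existsUnique_eq_of_causal _ fun n g g' hgg' ↦ ?_
  simp only [forcedCoeffs, coeffsEquiv, Equiv.coe_fn_symm_mk]
  rw [trunc_mk_congr fun m hm ↦ congr_arg Prod.fst (hgg' m hm),
    trunc_mk_congr fun m hm ↦ congr_arg (·.2.1) (hgg' m hm),
    trunc_mk_congr fun m hm ↦ congr_arg (·.2.2) (hgg' m hm)]

theorem FactorCond.exists_natDegree_coeff_le {δ : (LaurentPolynomial ℝ)[X]} {D : PowerSeries ℝ}
    {Δ Δb : PowerSeries ℝ[X]} (h : FactorCond δ D Δ Δb) :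
    ∃ N : ℕ, ∀ n, (coeff n Δ).natDegree ≤ N := by
  obtain ⟨hprod, hD, -, hΔb, -, -⟩ := h
  obtain ⟨M, hM⟩ := δ.exists_coeff_mul_T_neg_mem_range
  set S := (PowerSeries.map (toLaurentInv (R := ℝ))).range
  set D' := invOfUnit D 1
  set Δb' := invOfUnit Δb 1
  have hδS : (mk fun n ↦ δ.coeff n) * C (T (-M)) ∈ S :=
    mem_range_map_iff.2 fun n ↦ by simpa using hM n
  have hDS : map (algebraMap ℝ (LaurentPolynomial ℝ)) D' ∈ S :=
    ⟨map (algebraMap ℝ ℝ[X]) D', by rw [← RingHom.comp_apply, ← map_comp, AlgHom.comp_algebraMap]⟩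
  have hΔbS : map toLaurentInv Δb' ∈ S := ⟨Δb', rfl⟩
  have key : map toLaurent Δ * C (T (-M))
      = (mk fun n ↦ δ.coeff n) * C (T (-M)) * map (algebraMap ℝ _) D' * map toLaurentInv Δb' := by
    calc map toLaurent Δ * C (T (-M))
        = map toLaurent Δ * C (T (-M)) * map (algebraMap ℝ _) (D * D')
            * map toLaurentInv (Δb * Δb') := by
          rw [mul_invOfUnit D 1 (by simp [hD]), mul_invOfUnit Δb 1 (by simp [hΔb]), map_one,
            map_one, mul_one, mul_one]
      _ = _ := by
          rw [hprod, map_mul, map_mul]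
          ring
  have hΔS : map toLaurent Δ * C (T (-M)) ∈ S := key ▸ mul_mem (mul_mem hδS hDS) hΔbS
  exact ⟨M, fun n ↦ LaurentPolynomial.natDegree_le_of_toLaurent_mul_T_neg_mem
    (by simpa using mem_range_map_iff.1 hΔS n)⟩

theorem FactorCond.map_invert {δ : (LaurentPolynomial ℝ)[X]} {D : PowerSeries ℝ}
    {Δ Δb : PowerSeries ℝ[X]} (h : FactorCond δ D Δ Δb) :
    FactorCond (δ.map (invert (R := ℝ) : ℝ[T;T⁻¹] →+* ℝ[T;T⁻¹])) D Δb Δ := by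
  obtain ⟨hprod, hD, hΔ, hΔb, hΔ0, hΔb0⟩ := h
  refine ⟨?_, hD, hΔb, hΔ, hΔb0, hΔ0⟩
  change _ = factorProd D Δb Δ
  rw [← map_invert_factorProd, ← show _ = factorProd D Δ Δb from hprod]
  ext n : 1
  simp

/-- the factorization lemma: any polynomial `δ(x;t)` in `t` with
coefficients in `ℝ[x,x⁻¹]` and `δ(x;0) = 1` admits a unique canonical factorization
`δ = D·Δ·Δ̄`; moreover the factors `Δ`, `Δ̄` are polynomials in `x` (resp. `x⁻¹`),
i.e. have uniformly bounded degrees. -/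
theorem factorization_lemma (δ : Polynomial (LaurentPolynomial ℝ)) (hδ : δ.coeff 0 = 1) :
    (∃! p : PowerSeries ℝ × PowerSeries (Polynomial ℝ) × PowerSeries (Polynomial ℝ),
        FactorCond δ p.1 p.2.1 p.2.2)
    ∧ ∀ D Δ Δb, FactorCond δ D Δ Δb →
        (∃ N : ℕ, ∀ n : ℕ, (PowerSeries.coeff (R := Polynomial ℝ) n Δ).natDegree ≤ N)
        ∧ (∃ N : ℕ, ∀ n : ℕ, (PowerSeries.coeff (R := Polynomial ℝ) n Δb).natDegree ≤ N) :=
  ⟨existsUnique_factorCond hδ, fun _ _ _ h ↦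
    ⟨h.exists_natDegree_coeff_le, h.map_invert.exists_natDegree_coeff_le⟩⟩
end

section
/- For all n ≥ 0 and 0 ≤ k ≤ n, the number of walks on the slit plane of length 2n+1 that end at (1,0) and use exactly 2k vertical steps (steps (0,1) or (0,−1)) equals binom(2n, 2k) · 2^{2k} · C_{n−k}, where Cₘ = binom(2m,m)/(m+1) is the m-th Catalan number. In particular ∑_{k=0}^{n} binom(2n,2k) · 2^{2k} · C_{n−k} = C_{2n+1}. -/
open Filter

/-- The four steps of the ordinary square lattice. -/
def sqSteps : Set (ℤ × ℤ) := {(1,0), (-1,0), (0,1), (0,-1)}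

/-- The number of walks on the slit plane of length `n` ending at `(i,j)` and using
exactly `v` vertical steps (steps with zero horizontal displacement). -/
noncomputable def slitCountVert (A : Set (ℤ × ℤ)) (i j : ℤ) (n v : ℕ) : ℕ :=
  Nat.card {w : Fin (n+1) → ℤ × ℤ // IsSlitWalk A n w ∧ w (Fin.last n) = (i, j)
    ∧ (Finset.univ.filter
        (fun m : Fin n => (w m.succ - w m.castSucc).1 = 0)).card = v}


/-!
Encode a walk of length `L = 2n + 1` by its word `u` over `{E, W, N, S}`, continued past time `L`
by its mirror image in the horizontal axis, then by `u` again, and so on. If `u` has horizontal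
displacement `1`, its vertical displacement `2h` is even, and exactly one of the `L` rotations of
`u` inside this continuation is a slit walk ending at `(1, 0)`: the one starting at the last time
`t < L` at height `h` where the abscissa is minimal among such times (a cycle lemma). Since
rotations preserve the number of vertical steps, `L` times the number of slit walks with `2k`
vertical steps is the number `C(L, 2k) · 2^{2k} · C(L - 2k, n - k + 1)` of words with horizontal
displacement `1` and `2k` vertical steps. Summed over `k` this counts all words of horizontal
displacement `1`; coding each step by two bits so that a word of horizontal displacement `x` has
`L + x` ones, there are `C(2L, L + 1)` of them.
-/

namespace SlitPlane

open Finset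

inductive Step
  | E | W | N | S
  deriving DecidableEq

namespace Step

instance : Fintype Step where
  elems := {E, W, N, S}
  complete s := by cases s <;> decide

def vec : Step → ℤ × ℤ
  | E => (1, 0)
  | W => (-1, 0)
  | N => (0, 1)
  | S => (0, -1)

def flip : Step → Step
  | E => E
  | W => W
  | N => S
  | S => N

@[simp] lemma flip_flip (s : Step) : s.flip.flip = s := by cases s <;> rfl

@[simp] lemma fst_vec_flip (s : Step) : s.flip.vec.1 = s.vec.1 := by cases s <;> rfl

@[simp] lemma snd_vec_flip (s : Step) : s.flip.vec.2 = -s.vec.2 := by cases s <;> rfl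

lemma fst_vec_iterate_flip (k : ℕ) (s : Step) : (flip^[k] s).vec.1 = s.vec.1 := by
  induction k with
  | zero => rfl
  | succ k ih => rw [Function.iterate_succ_apply', fst_vec_flip, ih]

lemma vec_injective : Function.Injective vec := by
  intro s t h
  cases s <;> cases t <;> simp_all [vec]

lemma mem_sqSteps_iff {z : ℤ × ℤ} : z ∈ sqSteps ↔ ∃ s, vec s = z := by
  constructor
  · rintro (rfl | rfl | rfl | rfl)
    exacts [⟨E, rfl⟩, ⟨W, rfl⟩, ⟨N, rfl⟩, ⟨S, rfl⟩]
  · rintro ⟨s, rfl⟩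
    cases s <;> simp [vec, sqSteps]

lemma odd_fst_vec_add_snd_vec (s : Step) : Odd (s.vec.1 + s.vec.2) := by
  cases s <;> decide

lemma abs_snd_vec_le_one (s : Step) : |s.vec.2| ≤ 1 := by
  cases s <;> decide

def bit : Step → Bool → Bool
  | E, _ => true
  | W, _ => false
  | N, b => b
  | S, b => !b

def ofBit (f : Bool → Bool) : Step :=
  match f true, f false with
  | true, true => E
  | false, false => W
  | true, false => N
  | false, true => S

lemma ofBit_bit (s : Step) : ofBit s.bit = s := by
  cases s <;> rfl

lemma bit_ofBit (f : Bool → Bool) : (ofBit f).bit = f := by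
  funext b
  cases h₁ : f true <;> cases h₂ : f false <;> cases b <;> simp [ofBit, bit, h₁, h₂]

lemma card_bit (s : Step) : (#{b | s.bit b} : ℤ) = s.vec.1 + 1 := by
  cases s <;> rfl

end Step

lemma exists_eq_of_abs_sub_le_one {f : ℕ → ℤ} (hf : ∀ t, |f (t + 1) - f t| ≤ 1) {m : ℤ} {N : ℕ}
    (h0 : f 0 ≤ m) (hN : m ≤ f N) : ∃ t ≤ N, f t = m := by
  induction N with
  | zero => exact ⟨0, le_rfl, le_antisymm h0 hN⟩
  | succ N ih =>
    by_cases hm : m ≤ f N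
    · obtain ⟨t, ht, hft⟩ := ih hm
      exact ⟨t, ht.trans N.le_succ, hft⟩
    · have := abs_le.1 (hf N)
      exact ⟨N + 1, le_rfl, by omega⟩

lemma forall_add_iff_forall_lt_of_periodic {L i : ℕ} {P : ℕ → Prop} (hP : ∀ t, P (L + t) ↔ P t)
    (hi : i < L) : (∀ t, 1 ≤ t → t ≤ L → P (i + t)) ↔ ∀ s < L, P s := by
  constructor
  · intro h s hs
    rcases lt_or_ge i s with his | hsi
    · simpa [Nat.add_sub_cancel' his.le] using h (s - i) (by omega) (by omega)
    · refine (hP s).1 ?_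
      simpa [show i + (L + s - i) = L + s by omega] using h (L + s - i) (by omega) (by omega)
  · intro h t ht htL
    rcases lt_or_ge (i + t) L with hlt | hge
    · exact h _ hlt
    · obtain ⟨s, hs⟩ := Nat.exists_eq_add_of_le hge
      rw [hs]
      exact (hP s).2 (h s (by omega))

lemma choose_two_mul_add_one_succ (m : ℕ) :
    (2 * m + 1).choose (m + 1) = (2 * m + 1) * catalan m := by
  refine Nat.eq_of_mul_eq_mul_right m.succ_pos ?_
  rw [← Nat.add_one_mul_choose_eq, mul_assoc, mul_comm (catalan m),
    succ_mul_catalan_eq_centralBinom, Nat.centralBinom_eq_two_mul_choose]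

lemma choose_two_mul_succ (m : ℕ) : (2 * m).choose (m + 1) = m * catalan m := by
  refine Nat.eq_of_mul_eq_mul_right m.succ_pos ?_
  rw [Nat.choose_succ_right_eq, mul_assoc, mul_comm (catalan m),
    succ_mul_catalan_eq_centralBinom, Nat.centralBinom_eq_two_mul_choose, mul_comm, two_mul,
    Nat.add_sub_cancel]

section Words

variable {L : ℕ}

def vertSet (u : Fin L → Step) : Finset (Fin L) := {t | (u t).vec.1 = 0}

@[simp] lemma mem_vertSet {u : Fin L → Step} {t : Fin L} :
    t ∈ vertSet u ↔ (u t).vec.1 = 0 := by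
  simp [vertSet]

variable [NeZero L]

/-- `u`, then its mirror image `Step.flip ∘ u`, then `u` again, and so on. -/
def extend (u : Fin L → Step) (t : ℕ) : Step := Step.flip^[t / L] (u (Fin.ofNat L t))

def pos (u : Fin L → Step) (t : ℕ) : ℤ × ℤ := ∑ s ∈ range t, (extend u s).vec

def rot (i : ℕ) (u : Fin L → Step) : Fin L → Step := fun t => extend u (i + t)

def IsSlitWord (u : Fin L → Step) : Prop :=
  pos u L = (1, 0) ∧ ∀ t, 1 ≤ t → t ≤ L → pos u t ∉ slitH

variable (u : Fin L → Step)

lemma extend_of_lt {t : ℕ} (h : t < L) : extend u t = u ⟨t, h⟩ := by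
  simp [extend, Nat.div_eq_of_lt h, Fin.ofNat, Nat.mod_eq_of_lt h]

lemma extend_add_mul (t k : ℕ) : extend u (t + L * k) = Step.flip^[k] (extend u t) := by
  have hL : 0 < L := Nat.pos_of_neZero L
  have hdiv : (t + L * k) / L = k + t / L := by
    rw [Nat.add_mul_div_left _ _ hL, add_comm]
  have hmod : Fin.ofNat L (t + L * k) = Fin.ofNat L t := by
    ext; simp [Fin.ofNat]
  rw [extend, extend, hdiv, hmod, Function.iterate_add_apply]

lemma extend_length_add (t : ℕ) : extend u (L + t) = (extend u t).flip := by
  simpa [add_comm] using extend_add_mul u t 1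

lemma extend_rot (i t : ℕ) : extend (rot i u) t = extend u (i + t) := by
  have hL : 0 < L := Nat.pos_of_neZero L
  conv_lhs => rw [← Nat.mod_add_div t L]
  rw [extend_add_mul, extend_of_lt _ (Nat.mod_lt t hL), rot, ← extend_add_mul, add_assoc,
    Nat.mod_add_div]

@[simp] lemma pos_zero : pos u 0 = 0 := rfl

lemma pos_succ (t : ℕ) : pos u (t + 1) = pos u t + (extend u t).vec :=
  sum_range_succ _ _

lemma pos_add (i t : ℕ) : pos u (i + t) = pos u i + pos (rot i u) t := by
  simp only [pos, sum_range_add, extend_rot]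

lemma pos_rot (i t : ℕ) : pos (rot i u) t = pos u (i + t) - pos u i := by
  rw [pos_add]; abel

lemma fst_pos_length_add (t : ℕ) : (pos u (L + t)).1 = (pos u L).1 + (pos u t).1 := by
  simp only [pos, sum_range_add, Prod.fst_add, Prod.fst_sum, extend_length_add,
    Step.fst_vec_flip]

lemma snd_pos_length_add (t : ℕ) : (pos u (L + t)).2 = (pos u L).2 - (pos u t).2 := by
  simp only [pos, sum_range_add, Prod.snd_add, Prod.snd_sum, extend_length_add,
    Step.snd_vec_flip, sum_neg_distrib, sub_eq_add_neg]

lemma rot_rot (i j : ℕ) : rot j (rot i u) = rot (i + j) u := by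
  funext t
  simp only [rot, extend_rot, add_assoc]

lemma rot_two_mul_length : rot (2 * L) u = u := by
  funext t
  rw [rot, two_mul, add_assoc, extend_length_add, extend_length_add, Step.flip_flip,
    extend_of_lt _ t.2]

lemma fst_pos_rot_length (i : ℕ) : (pos (rot i u) L).1 = (pos u L).1 := by
  rw [pos_rot, Prod.fst_sub, add_comm, fst_pos_length_add]; ring

lemma card_vertSet_rot (i : ℕ) : #(vertSet (rot i u)) = #(vertSet u) := by
  refine card_equiv (Equiv.addLeft (Fin.ofNat L i)) fun t => ?_
  have : Fin.ofNat L (i + t) = Fin.ofNat L i + t := by ext; simp [Fin.ofNat, Fin.val_add]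
  simp only [mem_vertSet, rot, extend, Step.fst_vec_iterate_flip, this, Equiv.coe_addLeft]

lemma even_fst_pos_add_snd_pos_add (t : ℕ) : Even ((pos u t).1 + (pos u t).2 + t) := by
  induction t with
  | zero => simp [pos]
  | succ t ih =>
    have h := (extend u t).odd_fst_vec_add_snd_vec
    rw [pos_succ, Prod.fst_add, Prod.snd_add, Nat.cast_succ,
      show ∀ a b c x y : ℤ, a + x + (b + y) + (c + 1) = a + b + c + (x + y + 1) by intros; ring]
    exact ih.add h.add_one

lemma even_snd_pos_length (hL : Odd L) (hx : (pos u L).1 = 1) : Even (pos u L).2 := by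
  have h := even_fst_pos_add_snd_pos_add u L
  rw [hx, add_comm 1, add_assoc] at h
  exact (Int.even_add.1 h).2 (by rw [add_comm]; exact_mod_cast hL.add_one)

end Words

section CycleLemma

variable {L : ℕ} [NeZero L] (u : Fin L → Step)

def OnLevel (t : ℕ) : Prop := 2 * (pos u t).2 = (pos u L).2

instance : DecidablePred (OnLevel u) := fun _ => inferInstanceAs (Decidable (_ = _))

/-- Within a window of `L` consecutive times, `key` compares abscissae first and then prefers
the later time. -/
def key (t : ℕ) : ℤ := L * (pos u t).1 - t

lemma onLevel_length_add (t : ℕ) : OnLevel u (L + t) ↔ OnLevel u t := by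
  rw [OnLevel, OnLevel, snd_pos_length_add]
  omega

lemma key_length_add (hx : (pos u L).1 = 1) (t : ℕ) : key u (L + t) = key u t := by
  rw [key, key, fst_pos_length_add, hx]
  push_cast
  ring

lemma eq_of_key_eq {s t : ℕ} (hs : s < L) (ht : t < L) (h : key u s = key u t) : s = t := by
  have hdvd : (L : ℤ) ∣ s - t := ⟨(pos u s).1 - (pos u t).1, by rw [key, key] at h; linarith⟩
  have := Int.eq_zero_of_abs_lt_dvd hdvd (abs_lt.2 ⟨by omega, by omega⟩)
  omega

lemma fst_pos_lt_iff_key_le {i t : ℕ} (hit : i < t) (hti : t ≤ i + L) :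
    (pos u i).1 < (pos u t).1 ↔ key u i ≤ key u t := by
  have hit' : (i : ℤ) < t := by exact_mod_cast hit
  have hti' : (t : ℤ) ≤ i + L := by exact_mod_cast hti
  rw [key, key]
  constructor
  · intro h
    nlinarith [mul_le_mul_of_nonneg_left (show (1 : ℤ) ≤ (pos u t).1 - (pos u i).1 by omega)
      (Nat.cast_nonneg L : (0 : ℤ) ≤ L)]
  · intro h
    by_contra hle
    nlinarith [mul_le_mul_of_nonneg_left (show (pos u t).1 - (pos u i).1 ≤ 0 by omega)
      (Nat.cast_nonneg L : (0 : ℤ) ≤ L)]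

lemma isSlitWord_rot_iff (hx : (pos u L).1 = 1) {i : ℕ} (hi : i < L) :
    IsSlitWord (rot i u) ↔ OnLevel u i ∧ ∀ s < L, OnLevel u s → key u i ≤ key u s := by
  have hend : pos (rot i u) L = (1, 0) ↔ OnLevel u i := by
    rw [pos_rot, add_comm, Prod.ext_iff, Prod.fst_sub, Prod.snd_sub, fst_pos_length_add,
      snd_pos_length_add, hx, OnLevel]
    omega
  have hP : ∀ t, (OnLevel u (L + t) → key u i ≤ key u (L + t)) ↔
      (OnLevel u t → key u i ≤ key u t) := fun t => by
    rw [onLevel_length_add, key_length_add u hx]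
  rw [IsSlitWord, hend, ← forall_add_iff_forall_lt_of_periodic hP hi]
  refine and_congr_right fun hlev => forall₃_congr fun t ht htL => ?_
  rw [← fst_pos_lt_iff_key_le u (by omega) (by omega)]
  simp only [slitH, Set.mem_ofPred_eq, pos_rot, Prod.fst_sub, Prod.snd_sub, OnLevel] at hlev ⊢
  omega

lemma exists_onLevel (hy : Even (pos u L).2) : ∃ s < L, OnLevel u s := by
  obtain ⟨h, hh⟩ := hy
  have hstep : ∀ t, |(pos u (t + 1)).2 - (pos u t).2| ≤ 1 := fun t => by
    simpa [pos_succ] using (extend u t).abs_snd_vec_le_one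
  obtain ⟨t, htL, hth⟩ : ∃ t ≤ L, (pos u t).2 = h := by
    rcases le_total 0 h with h0 | h0
    · exact exists_eq_of_abs_sub_le_one (f := fun t => (pos u t).2) (N := L) hstep
        (by simpa using h0) (by omega)
    · obtain ⟨t, htL, hth⟩ := exists_eq_of_abs_sub_le_one (f := fun t => -(pos u t).2) (m := -h)
        (N := L) (fun t => by rw [neg_sub_neg, abs_sub_comm]; exact hstep t) (by simpa using h0)
        (by omega)
      exact ⟨t, htL, by omega⟩
  rcases htL.lt_or_eq with htL | htL
  · exact ⟨t, htL, by rw [OnLevel]; omega⟩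
  · rw [htL] at hth
    exact ⟨0, Nat.pos_of_neZero L, by simp only [OnLevel, pos_zero, Prod.snd_zero]; omega⟩

theorem existsUnique_isSlitWord_rot (hx : (pos u L).1 = 1) (hy : Even (pos u L).2) :
    ∃! i : Fin L, IsSlitWord (rot i u) := by
  obtain ⟨s₀, hs₀, hlev₀⟩ := exists_onLevel u hy
  obtain ⟨i, hi, hmin⟩ := ((range L).filter (OnLevel u)).exists_min_image (key u)
    ⟨s₀, mem_filter.2 ⟨mem_range.2 hs₀, hlev₀⟩⟩
  rw [mem_filter, mem_range] at hi
  refine ⟨⟨i, hi.1⟩, (isSlitWord_rot_iff u hx hi.1).2 ⟨hi.2, fun s hs hlev => ?_⟩, ?_⟩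
  · exact hmin s (mem_filter.2 ⟨mem_range.2 hs, hlev⟩)
  · rintro ⟨j, hj⟩ hslit
    obtain ⟨hjlev, hjmin⟩ := (isSlitWord_rot_iff u hx hj).1 hslit
    exact Fin.ext <| eq_of_key_eq u hj hi.1 <|
      le_antisymm (hjmin i hi.1 hi.2) (hmin j (mem_filter.2 ⟨mem_range.2 hj, hjlev⟩))

end CycleLemma

section Rotation

variable {L : ℕ} [NeZero L]

lemma rot_rot_two_mul_sub (u : Fin L → Step) {j : ℕ} (hj : j ≤ 2 * L) :
    rot j (rot (2 * L - j) u) = u := by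
  rw [rot_rot, Nat.sub_add_cancel hj, rot_two_mul_length]

lemma rot_two_mul_sub_rot (u : Fin L → Step) {j : ℕ} (hj : j ≤ 2 * L) :
    rot (2 * L - j) (rot j u) = u := by
  rw [rot_rot, Nat.add_sub_cancel' hj, rot_two_mul_length]

theorem card_fst_pos_eq_one_eq_card_isSlitWord_mul (hL : Odd L) (v : ℕ) :
    Nat.card {u : Fin L → Step // (pos u L).1 = 1 ∧ #(vertSet u) = v} =
      Nat.card {w : Fin L → Step // IsSlitWord w ∧ #(vertSet w) = v} * L := by
  have hj : ∀ j : Fin L, (j : ℕ) ≤ 2 * L := fun j => by omega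
  let Φ : {w : Fin L → Step // IsSlitWord w ∧ #(vertSet w) = v} × Fin L →
      {u : Fin L → Step // (pos u L).1 = 1 ∧ #(vertSet u) = v} := fun p =>
    ⟨rot (2 * L - p.2) p.1.1, by
      rw [fst_pos_rot_length, card_vertSet_rot, p.1.2.1.1]; exact ⟨rfl, p.1.2.2⟩⟩
  have hΦ : Function.Bijective Φ := by
    constructor
    · rintro ⟨⟨w, hw⟩, j⟩ ⟨⟨w', hw'⟩, j'⟩ h
      have hu : rot (2 * L - j) w = rot (2 * L - j') w' := congrArg Subtype.val h
      have hx : (pos (rot (2 * L - j) w) L).1 = 1 := by rw [fst_pos_rot_length, hw.1.1]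
      obtain rfl : j = j' :=
        (existsUnique_isSlitWord_rot _ hx (even_snd_pos_length _ hL hx)).unique
          (by rw [rot_rot_two_mul_sub _ (hj j)]; exact hw.1)
          (by rw [hu, rot_rot_two_mul_sub _ (hj j')]; exact hw'.1)
      obtain rfl : w = w' := by
        rw [← rot_rot_two_mul_sub w (hj j), hu, rot_rot_two_mul_sub w' (hj j)]
      rfl
    · rintro ⟨u, hx, hv⟩
      obtain ⟨i, hi, -⟩ := existsUnique_isSlitWord_rot u hx (even_snd_pos_length u hL hx)
      exact ⟨(⟨rot i u, hi, by rw [card_vertSet_rot, hv]⟩, i),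
        Subtype.ext (rot_two_mul_sub_rot u (hj i))⟩
  rw [← Nat.card_eq_of_bijective Φ hΦ, Nat.card_prod, Nat.card_eq_fintype_card (α := Fin L),
    Fintype.card_fin]

end Rotation

section Decomposition

variable {L : ℕ}

def eastSet (u : Fin L → Step) : Finset (Fin L) := {t | u t = .E}

def northSet (u : Fin L → Step) : Finset (Fin L) := {t | u t = .N}

@[simp] lemma mem_eastSet {u : Fin L → Step} {t : Fin L} : t ∈ eastSet u ↔ u t = .E := by
  simp [eastSet]

@[simp] lemma mem_northSet {u : Fin L → Step} {t : Fin L} : t ∈ northSet u ↔ u t = .N := by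
  simp [northSet]

def ofSets (V A B : Finset (Fin L)) : Fin L → Step := fun t =>
  if t ∈ V then (if t ∈ A then .N else .S) else (if t ∈ B then .E else .W)

lemma vertSet_ofSets (V A B : Finset (Fin L)) : vertSet (ofSets V A B) = V := by
  ext t
  by_cases hV : t ∈ V <;> by_cases hA : t ∈ A <;> by_cases hB : t ∈ B <;>
    simp [ofSets, hV, hA, hB, Step.vec]

lemma northSet_ofSets {V A : Finset (Fin L)} (B : Finset (Fin L)) (hA : A ⊆ V) :
    northSet (ofSets V A B) = A := by
  ext t
  have := @hA t
  by_cases hV : t ∈ V <;> by_cases hA' : t ∈ A <;> by_cases hB : t ∈ B <;> simp_all [ofSets]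

lemma eastSet_ofSets {V B : Finset (Fin L)} (A : Finset (Fin L)) (hB : Disjoint V B) :
    eastSet (ofSets V A B) = B := by
  ext t
  have := fun h : t ∈ V => disjoint_left.1 hB h
  by_cases hV : t ∈ V <;> by_cases hA : t ∈ A <;> by_cases hB' : t ∈ B <;> simp_all [ofSets]

lemma ofSets_vertSet_northSet_eastSet (u : Fin L → Step) :
    ofSets (vertSet u) (northSet u) (eastSet u) = u := by
  funext t
  cases h : u t <;> simp [ofSets, h, Step.vec]

lemma northSet_subset_vertSet (u : Fin L → Step) : northSet u ⊆ vertSet u := by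
  intro t
  simp +contextual [Step.vec]

lemma disjoint_vertSet_eastSet (u : Fin L → Step) : Disjoint (vertSet u) (eastSet u) := by
  rw [disjoint_left]
  intro t hV hE
  rw [mem_eastSet] at hE
  simp [hE, Step.vec] at hV

def bitSet (u : Fin L → Step) : Finset (Fin L × Bool) := {p | (u p.1).bit p.2}

def ofBitSet (F : Finset (Fin L × Bool)) : Fin L → Step :=
  fun t => Step.ofBit fun b => (t, b) ∈ F

lemma bitSet_ofBitSet (F : Finset (Fin L × Bool)) : bitSet (ofBitSet F) = F := by
  ext ⟨t, b⟩
  simp [bitSet, ofBitSet, Step.bit_ofBit]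

lemma ofBitSet_bitSet (u : Fin L → Step) : ofBitSet (bitSet u) = u := by
  funext t
  simpa [bitSet, ofBitSet] using Step.ofBit_bit (u t)

theorem card_eastSet_vertSet (v e : ℕ) :
    #{u : Fin L → Step | #(eastSet u) = e ∧ #(vertSet u) = v} =
      L.choose v * (2 ^ v * (L - v).choose e) := by
  set T := (powersetCard v (univ : Finset (Fin L))).sigma fun V => V.powerset ×ˢ powersetCard e Vᶜ
  have hT : ∀ V A B : Finset (Fin L), ⟨V, (A, B)⟩ ∈ T ↔ #V = v ∧ A ⊆ V ∧ Disjoint V B ∧ #B = e := by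
    simp [T, subset_compl_iff_disjoint_left]
  have hcard : #T = L.choose v * (2 ^ v * (L - v).choose e) := by
    rw [card_sigma, sum_congr rfl fun V hV => ?_, sum_const, card_powersetCard, card_univ,
      Fintype.card_fin, smul_eq_mul]
    rw [mem_powersetCard_univ] at hV
    rw [card_product, card_powerset, card_powersetCard, card_compl, hV, Fintype.card_fin]
  rw [← hcard]
  refine card_nbij' (fun u => ⟨vertSet u, (northSet u, eastSet u)⟩)
    (fun p => ofSets p.1 p.2.1 p.2.2) (fun u hu => ?_) (fun ⟨V, A, B⟩ hp => ?_)
    (fun u _ => ofSets_vertSet_northSet_eastSet u) (fun ⟨V, A, B⟩ hp => ?_)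
  · simp only [mem_coe, mem_filter, mem_univ, true_and] at hu
    rw [mem_coe, hT]
    exact ⟨hu.2, northSet_subset_vertSet u, disjoint_vertSet_eastSet u, hu.1⟩
  · rw [mem_coe, hT] at hp
    simp only [mem_coe, mem_filter, mem_univ, true_and]
    rw [vertSet_ofSets, eastSet_ofSets _ hp.2.2.1]
    exact ⟨hp.2.2.2, hp.1⟩
  · rw [mem_coe, hT] at hp
    simp only [vertSet_ofSets, northSet_ofSets _ hp.2.1, eastSet_ofSets _ hp.2.2.1]

end Decomposition

section WordCounts

variable {L : ℕ} [NeZero L]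

lemma fst_pos_length_eq_sum (u : Fin L → Step) : (pos u L).1 = ∑ t, (u t).vec.1 := by
  rw [pos, Prod.fst_sum, ← Fin.sum_univ_eq_sum_range (fun s => (extend u s).vec.1)]
  exact sum_congr rfl fun t _ => by rw [extend_of_lt u t.2]

lemma fst_pos_length_add_length (u : Fin L → Step) :
    (pos u L).1 + L = 2 * #(eastSet u) + #(vertSet u) := by
  have h : ∀ s : Step,
      s.vec.1 + 1 = 2 * (if s = .E then 1 else 0) + (if s.vec.1 = 0 then 1 else 0) := by
    intro s; cases s <;> rfl
  rw [fst_pos_length_eq_sum, eastSet, vertSet, card_filter, card_filter]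
  push_cast
  rw [mul_sum, ← sum_add_distrib, ← sum_congr rfl fun t _ => h (u t), sum_add_distrib]
  simp

lemma even_card_vertSet (hL : Odd L) (u : Fin L → Step) (hx : (pos u L).1 = 1) :
    Even #(vertSet u) := by
  have h := fst_pos_length_add_length u
  obtain ⟨m, hm⟩ := hL
  rw [Nat.even_iff]
  omega

theorem card_fst_pos_eq_one_card_vertSet {v e : ℕ} (h : L + 1 = v + 2 * e) :
    #{u : Fin L → Step | (pos u L).1 = 1 ∧ #(vertSet u) = v} =
      L.choose v * (2 ^ v * (L - v).choose e) := by
  rw [← card_eastSet_vertSet]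
  refine congrArg card (filter_congr fun u _ => ?_)
  have := fst_pos_length_add_length u
  omega

lemma card_bitSet (u : Fin L → Step) : (#(bitSet u) : ℤ) = (pos u L).1 + L := by
  have h : (#(bitSet u) : ℤ) = ∑ t, (#{b | (u t).bit b} : ℤ) := by
    rw [bitSet, card_filter, Fintype.sum_prod_type]
    push_cast
    refine sum_congr rfl fun t _ => ?_
    rw [card_filter]
    push_cast
    rfl
  rw [h, sum_congr rfl fun t _ => Step.card_bit (u t), sum_add_distrib, ← fst_pos_length_eq_sum]
  simp

theorem card_fst_pos_eq_one :
    #{u : Fin L → Step | (pos u L).1 = 1} = (2 * L).choose (L + 1) := by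
  have hcard :
      #(powersetCard (L + 1) (univ : Finset (Fin L × Bool))) = (2 * L).choose (L + 1) := by
    simp [mul_comm]
  rw [← hcard]
  refine card_nbij' bitSet ofBitSet (fun u hu => ?_) (fun F hF => ?_)
    (fun u _ => ofBitSet_bitSet u) (fun F _ => bitSet_ofBitSet F)
  · simp only [mem_coe, mem_filter, mem_univ, true_and, mem_powersetCard, subset_univ] at hu ⊢
    have := card_bitSet u
    omega
  · simp only [mem_coe, mem_filter, mem_univ, true_and, mem_powersetCard, subset_univ] at hF ⊢
    have := card_bitSet (ofBitSet F)
    rw [bitSet_ofBitSet, hF] at this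
    omega

end WordCounts

section Walks

variable {L : ℕ} [NeZero L]

def walkOf (u : Fin L → Step) : Fin (L + 1) → ℤ × ℤ := fun t => pos u t

lemma walkOf_succ_sub (u : Fin L → Step) (m : Fin L) :
    walkOf u m.succ - walkOf u m.castSucc = (u m).vec := by
  simp [walkOf, pos_succ, extend_of_lt u m.2]

lemma walkOf_injective : Function.Injective (walkOf : (Fin L → Step) → Fin (L + 1) → ℤ × ℤ) :=
  fun u u' h => funext fun m => Step.vec_injective <| by
    rw [← walkOf_succ_sub, ← walkOf_succ_sub, h]

lemma exists_walkOf_eq {w : Fin (L + 1) → ℤ × ℤ} (h0 : w 0 = (0, 0))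
    (hstep : ∀ m : Fin L, w m.succ - w m.castSucc ∈ sqSteps) : ∃ u, walkOf u = w := by
  choose u hu using fun m => Step.mem_sqSteps_iff.1 (hstep m)
  refine ⟨u, funext fun t => ?_⟩
  induction t using Fin.induction with
  | zero => simpa [walkOf] using Prod.mk_zero_zero.symm.trans h0.symm
  | succ m ih =>
    rw [← sub_add_cancel (walkOf u m.succ), walkOf_succ_sub, ih, hu, sub_add_cancel]

lemma isSlitWalk_walkOf_iff (u : Fin L → Step) :
    (IsSlitWalk sqSteps L (walkOf u) ∧ walkOf u (Fin.last L) = (1, 0)) ↔ IsSlitWord u := by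
  constructor
  · rintro ⟨⟨-, -, havoid⟩, hend⟩
    exact ⟨hend, fun t ht htL => havoid ⟨t, by omega⟩ ht⟩
  · rintro ⟨hend, havoid⟩
    refine ⟨⟨by simp [walkOf]; rfl, fun m => ?_, fun m hm => havoid m hm (by omega)⟩, hend⟩
    rw [walkOf_succ_sub]
    exact Step.mem_sqSteps_iff.2 ⟨_, rfl⟩

lemma card_vertical_walkOf (u : Fin L → Step) :
    #{m : Fin L | (walkOf u m.succ - walkOf u m.castSucc).1 = 0} = #(vertSet u) := by
  simp only [walkOf_succ_sub]
  rfl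

theorem slitCountVert_eq_card (v : ℕ) :
    slitCountVert sqSteps 1 0 L v =
      Nat.card {u : Fin L → Step // IsSlitWord u ∧ #(vertSet u) = v} := by
  have hmem (u : {u : Fin L → Step // IsSlitWord u ∧ #(vertSet u) = v}) :
      IsSlitWalk sqSteps L (walkOf u.1) ∧ walkOf u.1 (Fin.last L) = (1, 0) ∧
        #{m : Fin L | (walkOf u.1 m.succ - walkOf u.1 m.castSucc).1 = 0} = v := by
    rw [card_vertical_walkOf, ← and_assoc, isSlitWalk_walkOf_iff]
    exact u.2
  refine (Nat.card_eq_of_bijective (fun u => ⟨walkOf u.1, hmem u⟩) ⟨fun u u' h => ?_, ?_⟩).symm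
  · exact Subtype.ext (walkOf_injective (congrArg Subtype.val h))
  · rintro ⟨w, ⟨h0, hstep, havoid⟩, hend, hv⟩
    obtain ⟨u, rfl⟩ := exists_walkOf_eq h0 hstep
    refine ⟨⟨u, (isSlitWalk_walkOf_iff u).1 ⟨⟨h0, hstep, havoid⟩, hend⟩, ?_⟩, rfl⟩
    rwa [← card_vertical_walkOf]

end Walks

theorem sum_card_vertSet_eq_two_mul (n : ℕ) :
    ∑ k ∈ range (n + 1),
        #{u : Fin (2 * n + 1) → Step | (pos u (2 * n + 1)).1 = 1 ∧ #(vertSet u) = 2 * k} =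
      #{u : Fin (2 * n + 1) → Step | (pos u (2 * n + 1)).1 = 1} := by
  symm
  rw [card_eq_sum_card_fiberwise (f := fun u => #(vertSet u) / 2) (t := range (n + 1))
    fun u _ => ?_]
  · refine sum_congr rfl fun k _ => ?_
    rw [filter_filter]
    refine congrArg card (filter_congr fun u _ => and_congr_right fun hx => ?_)
    have := Nat.even_iff.1 (even_card_vertSet (odd_two_mul_add_one n) u hx)
    omega
  · have := card_le_univ (vertSet u)
    rw [Fintype.card_fin] at this
    rw [mem_coe, mem_range]
    dsimp only
    omega

theorem card_vertSet_eq_two_mul {n k : ℕ} (hk : k ≤ n) :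
    #{u : Fin (2 * n + 1) → Step | (pos u (2 * n + 1)).1 = 1 ∧ #(vertSet u) = 2 * k} =
      (2 * n + 1) * ((2 * n).choose (2 * k) * 2 ^ (2 * k) * catalan (n - k)) := by
  have hsub : 2 * n + 1 - 2 * k = 2 * (n - k) + 1 := by omega
  have hchoose := Nat.choose_mul_succ_eq (2 * n) (2 * k)
  rw [hsub] at hchoose
  rw [card_fst_pos_eq_one_card_vertSet (e := n - k + 1) (by omega), hsub,
    choose_two_mul_add_one_succ]
  calc (2 * n + 1).choose (2 * k) * (2 ^ (2 * k) * ((2 * (n - k) + 1) * catalan (n - k)))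
      = (2 * n + 1).choose (2 * k) * (2 * (n - k) + 1) * 2 ^ (2 * k) * catalan (n - k) := by
        ring
    _ = (2 * n + 1) * ((2 * n).choose (2 * k) * 2 ^ (2 * k) * catalan (n - k)) := by
      rw [← hchoose]; ring

theorem slitCountVert_mul_eq {n k : ℕ} (hk : k ≤ n) :
    slitCountVert sqSteps 1 0 (2 * n + 1) (2 * k) * (2 * n + 1) =
      (2 * n + 1) * ((2 * n).choose (2 * k) * 2 ^ (2 * k) * catalan (n - k)) := by
  rw [slitCountVert_eq_card,
    ← card_fst_pos_eq_one_eq_card_isSlitWord_mul (odd_two_mul_add_one n),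
    Nat.card_eq_fintype_card, Fintype.card_subtype, card_vertSet_eq_two_mul hk]

end SlitPlane

/-- the number of walks on the slit plane of length `2n+1` ending at
`(1,0)` with exactly `2k` vertical steps is `binom(2n,2k)·2^{2k}·C_{n−k}`; in
particular these numbers sum to `C_{2n+1}`. -/
theorem slit_count_1_0_vertical (n : ℕ) :
    (∀ k : ℕ, k ≤ n →
      slitCountVert sqSteps 1 0 (2 * n + 1) (2 * k)
        = Nat.choose (2 * n) (2 * k) * 2 ^ (2 * k) * catalan (n - k))
    ∧ ∑ k ∈ Finset.range (n + 1),
        Nat.choose (2 * n) (2 * k) * 2 ^ (2 * k) * catalan (n - k)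
      = catalan (2 * n + 1) := by
  have hL : 0 < 2 * n + 1 := by omega
  refine ⟨fun k hk => Nat.eq_of_mul_eq_mul_left hL ?_, Nat.eq_of_mul_eq_mul_left hL ?_⟩
  · rw [mul_comm, SlitPlane.slitCountVert_mul_eq hk]
  · rw [Finset.mul_sum, ← Finset.sum_congr rfl fun k hk =>
      SlitPlane.card_vertSet_eq_two_mul (Nat.lt_succ_iff.1 (Finset.mem_range.1 hk)),
      SlitPlane.sum_card_vertSet_eq_two_mul, SlitPlane.card_fst_pos_eq_one,
      SlitPlane.choose_two_mul_succ]
end
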